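/- arXiv:2311.03797 — 7 statements merged into one kernel-verified Lean document; each statement's English description precedes it below -/
import Mathlib

section
/- Fix an integer n ≥ 1 and τ > 0, and let v, v' : Fin n → ℝ^d be neighboring tuples, differing exactly in coordinate j₀. Let p(v), p(v') ∈ [0,1]^n be their selection probability vectors. Then |p_j(v) − p_j(v')| ≤ 6/n for every j ≠ j₀, and consequently the ℓ₁ distance satisfies Σ_{j=1}^n |p_j(v) − p_j(v')| ≤ 7. -/
open scoped BigOperators

/-- The score of index `j`: the number of indices `k` with `‖v j - v k‖ ≤ 2τ`. -/
noncomputable def score {n d : ℕ} (τ : ℝ) (v : Fin n → EuclideanSpace ℝ (Fin d))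
    (j : Fin n) : ℕ :=
  {k : Fin n | ‖v j - v k‖ ≤ 2 * τ}.ncard

open Classical in
/-- The selection probability of index `j`. -/
noncomputable def selProb {n d : ℕ} (τ : ℝ) (v : Fin n → EuclideanSpace ℝ (Fin d))
    (j : Fin n) : ℝ :=
  if (score τ v j : ℝ) < n / 2 then 0
  else if 2 * n / 3 ≤ (score τ v j : ℝ) then 1
  else ((score τ v j : ℝ) - n / 2) / (n / 6)

lemma clamp_lip (a b : ℝ) : |min 1 (max 0 a) - min 1 (max 0 b)| ≤ |a - b| := by
  have h1 : |max 0 a - max 0 b| ≤ |a - b| := by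
    rw [max_comm 0 a, max_comm 0 b]; exact abs_max_sub_max_le_abs a b 0
  have h2 : |min 1 (max 0 a) - min 1 (max 0 b)| ≤ |max 0 a - max 0 b| := by
    rw [min_comm 1 _, min_comm 1 _]
    have := abs_max_sub_max_le_abs (-(max 0 a)) (-(max 0 b)) (-1)
    rw [show max (-(max 0 a)) (-1) = -(min (max 0 a) 1) by rw [min_def, max_def]; split_ifs <;> linarith,
        show max (-(max 0 b)) (-1) = -(min (max 0 b) 1) by rw [min_def, max_def]; split_ifs <;> linarith] at this
    calc |min (max 0 a) 1 - min (max 0 b) 1| = |(-(min (max 0 a) 1)) - (-(min (max 0 b) 1))| := by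
          rw [← abs_neg]; ring_nf
      _ ≤ |(-(max 0 a)) - (-(max 0 b))| := this
      _ = |max 0 a - max 0 b| := by rw [← abs_neg]; ring_nf
  linarith

lemma selProb_eq {n d : ℕ} (hn : 1 ≤ n) (τ : ℝ) (v : Fin n → EuclideanSpace ℝ (Fin d))
    (j : Fin n) : selProb τ v j = min 1 (max 0 (((score τ v j : ℝ) - n / 2) / (n / 6))) := by
  have hn6 : (0:ℝ) < n / 6 := by positivity
  set s : ℝ := (score τ v j : ℝ)
  unfold selProb
  split_ifs with h1 h2
  · have : (s - n/2) / (n/6) < 0 := div_neg_of_neg_of_pos (by linarith) hn6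
    rw [max_eq_left this.le, min_eq_right (by norm_num)]
  · have : (1:ℝ) ≤ (s - n/2) / (n/6) := by
      rw [le_div_iff₀ hn6]; linarith
    rw [max_eq_right (by linarith), min_eq_left this]
  · have h0 : (0:ℝ) ≤ (s - n/2) / (n/6) := div_nonneg (by linarith) hn6.le
    have h1' : (s - n/2) / (n/6) ≤ 1 := by
      rw [div_le_one hn6]; linarith
    rw [max_eq_right h0, min_eq_right h1']

lemma score_as_finset {n d : ℕ} (τ : ℝ) (v : Fin n → EuclideanSpace ℝ (Fin d)) (j : Fin n) :
    score τ v j = (Finset.univ.filter (fun k => ‖v j - v k‖ ≤ 2 * τ)).card := by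
  classical
  unfold score
  rw [show {k : Fin n | ‖v j - v k‖ ≤ 2 * τ} = ↑(Finset.univ.filter (fun k => ‖v j - v k‖ ≤ 2 * τ)) by
    ext k; simp]
  exact Set.ncard_coe_finset _

theorem stmt0 {d : ℕ} (n : ℕ) (hn : 1 ≤ n) (τ : ℝ) (hτ : 0 < τ)
    (v v' : Fin n → EuclideanSpace ℝ (Fin d)) (j₀ : Fin n)
    (hdiff : v j₀ ≠ v' j₀) (hsame : ∀ j, j ≠ j₀ → v j = v' j) :
    (∀ j, j ≠ j₀ → |selProb τ v j - selProb τ v' j| ≤ 6 / n) ∧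
    ∑ j : Fin n, |selProb τ v j - selProb τ v' j| ≤ 7 := by
  classical
  have hn0 : (0:ℝ) < n := by exact_mod_cast hn
  -- score difference at most 1 for j ≠ j₀
  have hscore : ∀ j, j ≠ j₀ → |(score τ v j : ℝ) - (score τ v' j : ℝ)| ≤ 1 := by
    intro j hj
    rw [score_as_finset, score_as_finset]
    set A := Finset.univ.filter (fun k => ‖v j - v k‖ ≤ 2 * τ) with hA
    set B := Finset.univ.filter (fun k => ‖v' j - v' k‖ ≤ 2 * τ) with hB
    have herase : A.erase j₀ = B.erase j₀ := by
      ext k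
      simp only [Finset.mem_erase, hA, hB, Finset.mem_filter, Finset.mem_univ, true_and]
      constructor
      · rintro ⟨hk, h⟩; exact ⟨hk, by rwa [← hsame j hj, ← hsame k hk]⟩
      · rintro ⟨hk, h⟩; exact ⟨hk, by rwa [hsame j hj, hsame k hk]⟩
    have cA : (A.erase j₀).card ≤ A.card ∧ A.card ≤ (A.erase j₀).card + 1 := by
      constructor
      · exact Finset.card_le_card (Finset.erase_subset _ _)
      · by_cases h : j₀ ∈ A
        · rw [Finset.card_erase_of_mem h]; omega
        · rw [Finset.erase_eq_of_notMem h]; omega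
    have cB : (B.erase j₀).card ≤ B.card ∧ B.card ≤ (B.erase j₀).card + 1 := by
      constructor
      · exact Finset.card_le_card (Finset.erase_subset _ _)
      · by_cases h : j₀ ∈ B
        · rw [Finset.card_erase_of_mem h]; omega
        · rw [Finset.erase_eq_of_notMem h]; omega
    rw [herase] at cA
    set m := (B.erase j₀).card
    have h1 : (m:ℝ) ≤ A.card := by exact_mod_cast cA.1
    have h2 : (A.card:ℝ) ≤ m + 1 := by exact_mod_cast cA.2
    have h3 : (m:ℝ) ≤ B.card := by exact_mod_cast cB.1
    have h4 : (B.card:ℝ) ≤ m + 1 := by exact_mod_cast cB.2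
    rw [abs_le]; constructor <;> linarith
  -- Lipschitz bound
  have hlip : ∀ j, j ≠ j₀ → |selProb τ v j - selProb τ v' j| ≤ 6 / n := by
    intro j hj
    rw [selProb_eq hn, selProb_eq hn]
    have := clamp_lip (((score τ v j : ℝ) - n / 2) / (n / 6))
      (((score τ v' j : ℝ) - n / 2) / (n / 6))
    refine this.trans ?_
    rw [div_sub_div_same, show ((score τ v j : ℝ) - n/2 - ((score τ v' j : ℝ) - n/2)) = (score τ v j : ℝ) - (score τ v' j : ℝ) by ring,
       abs_div, abs_of_pos (by positivity : (0:ℝ) < n/6)]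
    rw [div_le_div_iff₀ (by positivity) hn0]
    have := hscore j hj
    nlinarith
  refine ⟨hlip, ?_⟩
  -- bound each term: at j₀ by 1, else by 6/n
  have hbound01 : ∀ (w : Fin n → EuclideanSpace ℝ (Fin d)) j, 0 ≤ selProb τ w j ∧ selProb τ w j ≤ 1 := by
    intro w j
    rw [selProb_eq hn]
    constructor
    · exact le_min (by norm_num) (le_max_left _ _)
    · exact min_le_left _ _
  have key : ∀ j : Fin n, |selProb τ v j - selProb τ v' j| ≤ if j = j₀ then (1:ℝ) else 6 / n := by
    intro j
    split_ifs with h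
    · have a := hbound01 v j; have b := hbound01 v' j
      rw [abs_le]; constructor <;> linarith [a.1, a.2, b.1, b.2]
    · exact hlip j h
  calc ∑ j : Fin n, |selProb τ v j - selProb τ v' j|
      ≤ ∑ j : Fin n, (if j = j₀ then (1:ℝ) else 6 / n) := Finset.sum_le_sum (fun j _ => key j)
    _ = 1 + ∑ j ∈ Finset.univ.erase j₀, (6 / n : ℝ) := by
        rw [← Finset.add_sum_erase _ _ (Finset.mem_univ j₀)]
        simp only [if_pos rfl]
        congr 1
        exact Finset.sum_congr rfl (fun j hj => by rw [if_neg (Finset.mem_erase.mp hj).1])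
    _ = 1 + (n - 1) * (6 / n) := by
        rw [Finset.sum_const, Finset.card_erase_of_mem (Finset.mem_univ j₀), Finset.card_univ,
          Fintype.card_fin, nsmul_eq_mul]
        congr 1
        congr 1
        push_cast [hn]
        ring
    _ ≤ 7 := by
        have : ((n:ℝ) - 1) * (6 / n) ≤ 6 := by
          rw [mul_div_assoc']
          rw [div_le_iff₀ hn0]
          nlinarith
        linarith
end

section
/- There is a universal constant C > 0 with the following property. Let n ≥ 1 and let p, p' ∈ [0,1]^n satisfy Σ_{i=1}^n |p_i − p'_i| ≤ 2. Let μ = ⊗_{i=1}^n Ber(p_i) and μ' = ⊗_{i=1}^n Ber(p'_i) be the corresponding product Bernoulli probability measures on {0,1}^n. Then for every ζ ∈ (0,1) there exists a probability measure Γ on {0,1}^n × {0,1}^n whose first marginal is μ and whose second marginal is μ', such that Γ({(x,y) : Σ_{i=1}^n |x_i − y_i| > C·log(2/ζ)}) ≤ ζ. -/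
/-!
Couple the coordinates independently, each by the maximal coupling of `Ber(p i)` and
`Ber(p' i)`, which disagrees with probability `|p i - p' i|`. The number of disagreements is
then a sum of independent indicators of total mean at most 2, so its exponential moment is at
most `exp (2 (e - 1))`, and Chernoff's bound gives the tail `exp (2 (e - 1) - t)`, which is at
most `ζ` for `t = 10 log (2 / ζ)`.
-/

open MeasureTheory
open scoped BigOperators ENNReal

/-- The Bernoulli probability measure on `Bool` with success probability `q`. -/
noncomputable def bern (q : ℝ) : Measure Bool :=
  ENNReal.ofReal (1 - q) • Measure.dirac false + ENNReal.ofReal q • Measure.dirac true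

open ProbabilityTheory

lemma isProbabilityMeasure_bern {q : ℝ} (hq : q ∈ Set.Icc (0 : ℝ) 1) :
    IsProbabilityMeasure (bern q) := by
  constructor
  simp only [bern, Measure.coe_add, Measure.coe_smul, Pi.add_apply, Pi.smul_apply,
    measure_univ, smul_eq_mul, mul_one]
  rw [← ENNReal.ofReal_add (by linarith [hq.2]) hq.1]
  norm_num

lemma ENNReal.ofReal_min_add_ofReal_sub {a b : ℝ} (hb : 0 ≤ b) :
    ENNReal.ofReal (min a b) + ENNReal.ofReal (a - b) = ENNReal.ofReal a := by
  rcases le_total a b with h | h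
  · rw [min_eq_left h, ENNReal.ofReal_of_nonpos (sub_nonpos.2 h), add_zero]
  · rw [min_eq_right h, ← ENNReal.ofReal_add hb (sub_nonneg.2 h), add_sub_cancel]

noncomputable def bernCoupling (q q' : ℝ) : Measure (Bool × Bool) :=
  ENNReal.ofReal (min (1 - q) (1 - q')) • Measure.dirac (false, false)
  + ENNReal.ofReal (min q q') • Measure.dirac (true, true)
  + ENNReal.ofReal (q - q') • Measure.dirac (true, false)
  + ENNReal.ofReal (q' - q) • Measure.dirac (false, true)

lemma bernCoupling_map_fst {q q' : ℝ} (hq' : q' ∈ Set.Icc (0 : ℝ) 1) :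
    (bernCoupling q q').map Prod.fst = bern q := by
  have h₀ := ENNReal.ofReal_min_add_ofReal_sub (a := 1 - q) (sub_nonneg.2 hq'.2)
  have h₁ := ENNReal.ofReal_min_add_ofReal_sub (a := q) hq'.1
  rw [sub_sub_sub_cancel_left] at h₀
  simp only [bernCoupling, Measure.map_add _ _ Measurable.of_discrete, Measure.map_smul,
    Measure.map_dirac' Measurable.of_discrete]
  rw [bern, ← h₀, ← h₁, add_smul, add_smul]
  abel

lemma bernCoupling_map_snd {q q' : ℝ} (hq : q ∈ Set.Icc (0 : ℝ) 1) :
    (bernCoupling q q').map Prod.snd = bern q' := by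
  have h₀ := ENNReal.ofReal_min_add_ofReal_sub (a := 1 - q') (sub_nonneg.2 hq.2)
  have h₁ := ENNReal.ofReal_min_add_ofReal_sub (a := q') hq.1
  rw [sub_sub_sub_cancel_left, min_comm] at h₀
  rw [min_comm] at h₁
  simp only [bernCoupling, Measure.map_add _ _ Measurable.of_discrete, Measure.map_smul,
    Measure.map_dirac' Measurable.of_discrete]
  rw [bern, ← h₀, ← h₁, add_smul, add_smul]
  abel

lemma isProbabilityMeasure_bernCoupling {q q' : ℝ} (hq : q ∈ Set.Icc (0 : ℝ) 1)
    (hq' : q' ∈ Set.Icc (0 : ℝ) 1) : IsProbabilityMeasure (bernCoupling q q') := by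
  have := isProbabilityMeasure_bern hq
  rw [← bernCoupling_map_fst hq'] at this
  exact Measure.isProbabilityMeasure_of_map Prod.fst

def mismatch (ab : Bool × Bool) : ℝ := if ab.1 = ab.2 then 0 else 1

lemma lintegral_exp_mismatch_bernCoupling {q q' : ℝ} (hq : q ∈ Set.Icc (0 : ℝ) 1)
    (hq' : q' ∈ Set.Icc (0 : ℝ) 1) :
    ∫⁻ ab, ENNReal.ofReal (Real.exp (mismatch ab)) ∂bernCoupling q q'
      = ENNReal.ofReal (1 + (Real.exp 1 - 1) * |q - q'|) := by
  obtain ⟨hq0, hq1⟩ := hq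
  obtain ⟨hq'0, hq'1⟩ := hq'
  simp only [bernCoupling, lintegral_add_measure, lintegral_smul_measure, lintegral_dirac,
    mismatch, Bool.false_eq_true, Bool.true_eq_false, if_true, if_false, Real.exp_zero,
    ENNReal.ofReal_one, smul_eq_mul, mul_one]
  rcases le_total q q' with h | h
  · rw [min_eq_right (by linarith), min_eq_left h, ENNReal.ofReal_of_nonpos (sub_nonpos.2 h),
      abs_sub_comm, abs_of_nonneg (sub_nonneg.2 h), zero_mul, add_zero,
      ← ENNReal.ofReal_mul (sub_nonneg.2 h), ← ENNReal.ofReal_add (by linarith) hq0,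
      ← ENNReal.ofReal_add (by linarith) (by positivity)]
    ring_nf
  · rw [min_eq_left (by linarith), min_eq_right h, ENNReal.ofReal_of_nonpos (sub_nonpos.2 h),
      abs_of_nonneg (sub_nonneg.2 h), zero_mul, add_zero,
      ← ENNReal.ofReal_mul (sub_nonneg.2 h), ← ENNReal.ofReal_add (by linarith) hq'0,
      ← ENNReal.ofReal_add (by linarith) (by positivity)]
    ring_nf

lemma lintegral_pi_prod_eq_prod {ι : Type*} [Fintype ι] {α : ι → Type*}
    [∀ i, MeasurableSpace (α i)] (μ : ∀ i, Measure (α i))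
    [∀ i, IsProbabilityMeasure (μ i)] {f : ∀ i, α i → ℝ≥0∞} (hf : ∀ i, Measurable (f i)) :
    ∫⁻ x, ∏ i, f i (x i) ∂Measure.pi μ = ∏ i, ∫⁻ a, f i a ∂μ i := by
  rw [lintegral_prod_eq_prod_lintegral_of_indepFun _ _
    (iIndepFun_pi fun i ↦ (hf i).aemeasurable) fun i ↦ (hf i).comp (measurable_pi_apply i)]
  exact Finset.prod_congr rfl fun i _ ↦ (measurePreserving_eval μ i).lintegral_comp (hf i)

section PiCoupling

variable {ι α β : Type*} [Fintype ι] [MeasurableSpace α] [MeasurableSpace β]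

noncomputable def piCoupling (γ : ι → Measure (α × β)) :
    Measure ((ι → α) × (ι → β)) :=
  (Measure.pi γ).map (MeasurableEquiv.arrowProdEquivProdArrow α β ι)

variable (γ : ι → Measure (α × β)) [∀ i, IsProbabilityMeasure (γ i)]

instance : IsProbabilityMeasure (piCoupling γ) :=
  Measure.isProbabilityMeasure_map (MeasurableEquiv.measurable _).aemeasurable

lemma piCoupling_map_fst :
    (piCoupling γ).map Prod.fst = Measure.pi fun i ↦ (γ i).map Prod.fst := by
  rw [piCoupling, Measure.map_map measurable_fst (MeasurableEquiv.measurable _)]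
  exact Measure.pi_map_pi fun _ ↦ measurable_fst.aemeasurable

lemma piCoupling_map_snd :
    (piCoupling γ).map Prod.snd = Measure.pi fun i ↦ (γ i).map Prod.snd := by
  rw [piCoupling, Measure.map_map measurable_snd (MeasurableEquiv.measurable _)]
  exact Measure.pi_map_pi fun _ ↦ measurable_snd.aemeasurable

lemma lintegral_exp_sum_piCoupling {f : α × β → ℝ} (hf : Measurable f) :
    ∫⁻ xy, ENNReal.ofReal (Real.exp (∑ i, f (xy.1 i, xy.2 i))) ∂piCoupling γ
      = ∏ i, ∫⁻ ab, ENNReal.ofReal (Real.exp (f ab)) ∂γ i := by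
  rw [piCoupling, lintegral_map_equiv]
  simp_rw [Real.exp_sum, ENNReal.ofReal_prod_of_nonneg fun _ _ ↦ (Real.exp_pos _).le]
  exact lintegral_pi_prod_eq_prod γ fun _ ↦
    ENNReal.measurable_ofReal.comp (Real.measurable_exp.comp hf)

end PiCoupling

lemma measure_lt_le_exp_neg_mul_lintegral_exp {Ω : Type*} [MeasurableSpace Ω] (μ : Measure Ω)
    {X : Ω → ℝ} (hX : Measurable X) (t : ℝ) :
    μ {ω | t < X ω}
      ≤ ENNReal.ofReal (Real.exp (-t)) * ∫⁻ ω, ENNReal.ofReal (Real.exp (X ω)) ∂μ := by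
  calc μ {ω | t < X ω}
      ≤ μ {ω | ENNReal.ofReal (Real.exp t) ≤ ENNReal.ofReal (Real.exp (X ω))} :=
        measure_mono fun ω hω ↦ ENNReal.ofReal_le_ofReal (Real.exp_le_exp.2 (le_of_lt hω))
    _ ≤ (∫⁻ ω, ENNReal.ofReal (Real.exp (X ω)) ∂μ) / ENNReal.ofReal (Real.exp t) :=
        meas_ge_le_lintegral_div (by fun_prop) (by positivity) ENNReal.ofReal_ne_top
    _ = _ := by
        rw [div_eq_mul_inv, mul_comm, ← ENNReal.ofReal_inv_of_pos (Real.exp_pos t), Real.exp_neg]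

lemma exp_sub_ten_mul_log_two_div_le {ζ : ℝ} (hζ₀ : 0 < ζ) (hζ₁ : ζ ≤ 1) :
    Real.exp ((Real.exp 1 - 1) * 2 - 10 * Real.log (2 / ζ)) ≤ ζ := by
  rw [← Real.le_log_iff_exp_le hζ₀, Real.log_div two_ne_zero hζ₀.ne']
  linarith [Real.exp_one_lt_three, Real.log_two_gt_d9, Real.log_nonpos hζ₀.le hζ₁]

theorem stmt1 : ∃ C : ℝ, 0 < C ∧
    ∀ (n : ℕ), 1 ≤ n → ∀ p p' : Fin n → ℝ,
    (∀ i, p i ∈ Set.Icc (0 : ℝ) 1) → (∀ i, p' i ∈ Set.Icc (0 : ℝ) 1) →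
    (∑ i : Fin n, |p i - p' i|) ≤ 2 →
    ∀ ζ : ℝ, ζ ∈ Set.Ioo (0 : ℝ) 1 →
    ∃ Γ : Measure ((Fin n → Bool) × (Fin n → Bool)), IsProbabilityMeasure Γ ∧
      Γ.map Prod.fst = Measure.pi (fun i => bern (p i)) ∧
      Γ.map Prod.snd = Measure.pi (fun i => bern (p' i)) ∧
      Γ {xy | (∑ i : Fin n, (if xy.1 i = xy.2 i then (0 : ℝ) else 1)) > C * Real.log (2 / ζ)}
        ≤ ENNReal.ofReal ζ := by
  refine ⟨10, by norm_num, fun n _ p p' hp hp' hsum ζ hζ ↦ ?_⟩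
  have := fun i ↦ isProbabilityMeasure_bernCoupling (hp i) (hp' i)
  refine ⟨piCoupling fun i ↦ bernCoupling (p i) (p' i), inferInstance, ?_, ?_, ?_⟩
  · simp_rw [piCoupling_map_fst, bernCoupling_map_fst (hp' _)]
  · simp_rw [piCoupling_map_snd, bernCoupling_map_snd (hp _)]
  set t := 10 * Real.log (2 / ζ)
  have hprod : ∏ i, ENNReal.ofReal (1 + (Real.exp 1 - 1) * |p i - p' i|)
      ≤ ENNReal.ofReal (Real.exp ((Real.exp 1 - 1) * 2)) := by
    have he : 0 ≤ Real.exp 1 - 1 := sub_nonneg.2 (Real.one_le_exp zero_le_one)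
    rw [← ENNReal.ofReal_prod_of_nonneg fun i _ ↦ by positivity]
    refine ENNReal.ofReal_le_ofReal
      ((Real.prod_one_add_le_exp_sum _ fun i ↦ by positivity).trans ?_)
    rw [← Finset.mul_sum]
    gcongr
  calc _ ≤ ENNReal.ofReal (Real.exp (-t)) * ∫⁻ xy, ENNReal.ofReal
          (Real.exp (∑ i, mismatch (xy.1 i, xy.2 i))) ∂piCoupling _ :=
        measure_lt_le_exp_neg_mul_lintegral_exp _ (by fun_prop) t
    _ = ENNReal.ofReal (Real.exp (-t)) *
          ∏ i, ENNReal.ofReal (1 + (Real.exp 1 - 1) * |p i - p' i|) := by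
        rw [lintegral_exp_sum_piCoupling _ Measurable.of_discrete]
        simp_rw [lintegral_exp_mismatch_bernCoupling (hp _) (hp' _)]
    _ ≤ ENNReal.ofReal (Real.exp (-t)) * ENNReal.ofReal (Real.exp ((Real.exp 1 - 1) * 2)) := by
        gcongr
    _ ≤ ENNReal.ofReal ζ := by
        rw [← ENNReal.ofReal_mul (Real.exp_pos _).le, ← Real.exp_add, neg_add_eq_sub]
        exact ENNReal.ofReal_le_ofReal (exp_sub_ten_mul_log_two_div_le hζ.1 hζ.2.le)
end

section
/- Fix an integer n ≥ 1 and τ > 0, and let v : Fin n → ℝ^d. Suppose there exists j* ∈ Fin n such that |{k ∈ Fin n : ‖v_k − v_{j*}‖ ≤ τ}| ≥ 2n/3. Then every index j ∈ Fin n with score f_j(v) ≥ n/2 satisfies ‖v_j − v_{j*}‖ ≤ 4τ. -/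
open scoped BigOperators

theorem stmt2 {d : ℕ} (n : ℕ) (hn : 1 ≤ n) (τ : ℝ) (hτ : 0 < τ)
    (v : Fin n → EuclideanSpace ℝ (Fin d)) (jstar : Fin n)
    (hcluster : (2 * n / 3 : ℝ) ≤ ({k : Fin n | ‖v k - v jstar‖ ≤ τ}.ncard : ℝ)) :
    ∀ j : Fin n, (n / 2 : ℝ) ≤ (score τ v j : ℝ) → ‖v j - v jstar‖ ≤ 4 * τ := by
  intro j hj
  set A := {k : Fin n | ‖v k - v jstar‖ ≤ τ} with hA
  set B := {k : Fin n | ‖v j - v k‖ ≤ 2 * τ} with hB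
  have hne : (A ∩ B).Nonempty := by
    by_contra h
    rw [Set.not_nonempty_iff_eq_empty] at h
    have h1 := Set.ncard_union_add_ncard_inter A B
    rw [h, Set.ncard_empty, add_zero] at h1
    have h2 : (A ∪ B).ncard ≤ n := by
      have := Set.ncard_le_ncard (Set.subset_univ (A ∪ B)) Set.finite_univ
      simpa [Set.ncard_univ] using this
    have h3 : (A.ncard : ℝ) + (B.ncard : ℝ) ≤ n := by
      rw [← Nat.cast_add, ← h1]
      exact_mod_cast h2
    have hn' : (1 : ℝ) ≤ n := by exact_mod_cast hn
    have hj' : (n / 2 : ℝ) ≤ (B.ncard : ℝ) := hj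
    linarith
  obtain ⟨k, hkA, hkB⟩ := hne
  have hkA' : ‖v k - v jstar‖ ≤ τ := hkA
  have hkB' : ‖v j - v k‖ ≤ 2 * τ := hkB
  calc ‖v j - v jstar‖ = ‖(v j - v k) + (v k - v jstar)‖ := by abel_nf
    _ ≤ ‖v j - v k‖ + ‖v k - v jstar‖ := norm_add_le _ _
    _ ≤ 4 * τ := by linarith
end

section
/- Fix an integer n ≥ 4 and τ > 0, and let v, v' : Fin n → ℝ^d be neighboring tuples. Suppose there exist j*, j'* ∈ Fin n with |{k : ‖v_k − v_{j*}‖ ≤ τ}| ≥ 2n/3 and |{k : ‖v'_k − v'_{j'*}‖ ≤ τ}| ≥ 2n/3. Then ‖v_{j*} − v'_{j'*}‖ ≤ 2τ, and moreover for any indices j, j' ∈ Fin n with f_j(v) ≥ n/2 and f_{j'}(v') ≥ n/2 one has ‖v_j − v'_{j'}‖ ≤ 10τ. -/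
open scoped BigOperators

lemma inter_card_lb {α : Type*} [Fintype α] (A B : Set α) :
    (A.ncard : ℝ) + B.ncard - Fintype.card α ≤ ((A ∩ B).ncard : ℝ) := by
  have h := Set.ncard_union_add_ncard_inter A B
  have hle : (A ∪ B).ncard ≤ Fintype.card α := by
    calc (A ∪ B).ncard ≤ (Set.univ : Set α).ncard :=
          Set.ncard_le_ncard (Set.subset_univ _) Set.finite_univ
      _ = Fintype.card α := by rw [Set.ncard_univ, Nat.card_eq_fintype_card]
  have : A.ncard + B.ncard ≤ Fintype.card α + (A ∩ B).ncard := by omega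
  have := (Nat.cast_le (α := ℝ)).2 this
  push_cast at this
  linarith

theorem stmt3 {d : ℕ} (n : ℕ) (hn : 4 ≤ n) (τ : ℝ) (hτ : 0 < τ)
    (v v' : Fin n → EuclideanSpace ℝ (Fin d))
    (hnbr : ∃ j₀ : Fin n, v j₀ ≠ v' j₀ ∧ ∀ j, j ≠ j₀ → v j = v' j)
    (jstar jstar' : Fin n)
    (h1 : (2 * n / 3 : ℝ) ≤ ({k : Fin n | ‖v k - v jstar‖ ≤ τ}.ncard : ℝ))
    (h2 : (2 * n / 3 : ℝ) ≤ ({k : Fin n | ‖v' k - v' jstar'‖ ≤ τ}.ncard : ℝ)) :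
    ‖v jstar - v' jstar'‖ ≤ 2 * τ ∧
    ∀ j j' : Fin n, (n / 2 : ℝ) ≤ (score τ v j : ℝ) → (n / 2 : ℝ) ≤ (score τ v' j' : ℝ) →
      ‖v j - v' j'‖ ≤ 10 * τ := by
  obtain ⟨j₀, hj₀, heq⟩ := hnbr
  set A : Set (Fin n) := {k : Fin n | ‖v k - v jstar‖ ≤ τ} with hA
  set B : Set (Fin n) := {k : Fin n | ‖v' k - v' jstar'‖ ≤ τ} with hB
  have hcard : (Fintype.card (Fin n) : ℝ) = n := by simp
  have hn4 : (4 : ℝ) ≤ (n : ℝ) := by exact_mod_cast hn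
  have hABlb : (n : ℝ) / 3 ≤ ((A ∩ B).ncard : ℝ) := by
    have := inter_card_lb A B
    rw [hcard] at this
    linarith
  -- first part
  have hfirst : ‖v jstar - v' jstar'‖ ≤ 2 * τ := by
    have h2lt : 1 < (A ∩ B).ncard := by
      by_contra h
      push_neg at h
      have : ((A ∩ B).ncard : ℝ) ≤ 1 := by exact_mod_cast h
      linarith
    obtain ⟨k, hk, hkj⟩ := Set.exists_ne_of_one_lt_ncard h2lt j₀
    have key : ∀ k ∈ A ∩ B, k ≠ j₀ → ‖v jstar - v' jstar'‖ ≤ 2 * τ := by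
      intro k hk hkj
      have hkA : ‖v k - v jstar‖ ≤ τ := hk.1
      have hkB : ‖v' k - v' jstar'‖ ≤ τ := hk.2
      rw [← heq k hkj] at hkB
      calc ‖v jstar - v' jstar'‖ = ‖(v jstar - v k) + (v k - v' jstar')‖ := by abel_nf
        _ ≤ ‖v jstar - v k‖ + ‖v k - v' jstar'‖ := norm_add_le _ _
        _ = ‖v k - v jstar‖ + ‖v k - v' jstar'‖ := by rw [norm_sub_rev]
        _ ≤ τ + τ := add_le_add hkA hkB
        _ = 2 * τ := by ring
    exact key k hk hkj
  refine ⟨hfirst, fun j j' hj hj' => ?_⟩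
  -- ‖v j - v jstar‖ ≤ 3τ
  have step : ∀ (w : Fin n → EuclideanSpace ℝ (Fin d)) (js i : Fin n),
      (2 * n / 3 : ℝ) ≤ ({k : Fin n | ‖w k - w js‖ ≤ τ}.ncard : ℝ) →
      (n / 2 : ℝ) ≤ (score τ w i : ℝ) → ‖w i - w js‖ ≤ 3 * τ := by
    intro w js i hC hS
    set C : Set (Fin n) := {k : Fin n | ‖w k - w js‖ ≤ τ}
    set S : Set (Fin n) := {k : Fin n | ‖w i - w k‖ ≤ 2 * τ}
    have hlb : (n : ℝ) / 6 ≤ ((C ∩ S).ncard : ℝ) := by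
      have := inter_card_lb C S
      rw [hcard] at this
      have hS' : (n / 2 : ℝ) ≤ (S.ncard : ℝ) := hS
      linarith
    have hne : (C ∩ S).Nonempty := by
      rw [Set.nonempty_iff_ne_empty]
      intro h
      rw [h] at hlb
      simp at hlb
      linarith
    obtain ⟨k, hkC, hkS⟩ := hne
    calc ‖w i - w js‖ = ‖(w i - w k) + (w k - w js)‖ := by abel_nf
      _ ≤ ‖w i - w k‖ + ‖w k - w js‖ := norm_add_le _ _
      _ ≤ 2 * τ + τ := add_le_add hkS hkC
      _ = 3 * τ := by ring
  have hvj := step v jstar j h1 hj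
  have hvj' := step v' jstar' j' h2 hj'
  calc ‖v j - v' j'‖ = ‖(v j - v jstar) + (v jstar - v' jstar') + (v' jstar' - v' j')‖ := by
        abel_nf
    _ ≤ ‖(v j - v jstar) + (v jstar - v' jstar')‖ + ‖v' jstar' - v' j'‖ := norm_add_le _ _
    _ ≤ ‖v j - v jstar‖ + ‖v jstar - v' jstar'‖ + ‖v' jstar' - v' j'‖ := by
        have := norm_add_le (v j - v jstar) (v jstar - v' jstar')
        linarith
    _ = ‖v j - v jstar‖ + ‖v jstar - v' jstar'‖ + ‖v' j' - v' jstar'‖ := by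
        rw [norm_sub_rev (v' jstar')]
    _ ≤ 3 * τ + 2 * τ + 3 * τ := by linarith
    _ ≤ 10 * τ := by linarith
end

section
/- Let E be a real normed vector space, ι a type, w : ι → E, and let A, B be nonempty finite subsets of ι with |A| ≤ |B|. Suppose D ≥ 0 satisfies ‖w_i − w_j‖ ≤ D for all i, j ∈ A ∪ B. Then ‖(1/|A|)·Σ_{i∈A} w_i − (1/|B|)·Σ_{j∈B} w_j‖ ≤ D·(|B| − |A| + |A\B| + |B\A|)/|B|. -/
open scoped BigOperators

theorem stmt4 {E : Type*} [NormedAddCommGroup E] [NormedSpace ℝ E]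
    {ι : Type*} [DecidableEq ι] (w : ι → E) (A B : Finset ι)
    (hA : A.Nonempty) (hB : B.Nonempty) (hcard : A.card ≤ B.card)
    (D : ℝ) (hD : 0 ≤ D)
    (hdiam : ∀ i ∈ A ∪ B, ∀ j ∈ A ∪ B, ‖w i - w j‖ ≤ D) :
    ‖(A.card : ℝ)⁻¹ • ∑ i ∈ A, w i - (B.card : ℝ)⁻¹ • ∑ j ∈ B, w j‖ ≤
      D * (((B.card : ℝ) - (A.card : ℝ) + ((A \ B).card : ℝ) + ((B \ A).card : ℝ)) /
        (B.card : ℝ)) := by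
  set a : ℝ := (A.card : ℝ) with ha_def
  set b : ℝ := (B.card : ℝ) with hb_def
  have ha : 0 < a := by rw [ha_def]; exact_mod_cast Finset.card_pos.mpr hA
  have hb : 0 < b := by rw [hb_def]; exact_mod_cast Finset.card_pos.mpr hB
  have hab : a ≤ b := by rw [ha_def, hb_def]; exact_mod_cast hcard
  set c : E := b⁻¹ • ∑ j ∈ B, w j with hc_def
  set f : ι → E := fun i => w i - c with hf_def
  have hf : ∀ i ∈ A ∪ B, ‖f i‖ ≤ D := by
    intro i hi
    have h1 : f i = b⁻¹ • ∑ j ∈ B, (w i - w j) := by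
      simp only [hf_def, hc_def, Finset.sum_sub_distrib, Finset.sum_const, smul_sub,
        hb_def]
      rw [smul_comm, ← Nat.cast_smul_eq_nsmul ℝ, smul_smul, mul_inv_cancel₀ hb.ne',
        one_smul]
    rw [h1, norm_smul]
    calc ‖(b⁻¹ : ℝ)‖ * ‖∑ j ∈ B, (w i - w j)‖
        ≤ b⁻¹ * ∑ j ∈ B, ‖w i - w j‖ := by
          rw [Real.norm_eq_abs, abs_of_pos (by positivity)]
          exact mul_le_mul_of_nonneg_left (norm_sum_le _ _) (by positivity)
      _ ≤ b⁻¹ * (B.card * D) := by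
          apply mul_le_mul_of_nonneg_left _ (by positivity)
          calc ∑ j ∈ B, ‖w i - w j‖ ≤ ∑ _j ∈ B, D :=
                Finset.sum_le_sum fun j hj => hdiam i hi j (Finset.mem_union_right _ hj)
            _ = B.card * D := by rw [Finset.sum_const, nsmul_eq_mul]
      _ = D := by rw [← hb_def]; field_simp
  have hsumB : ∑ j ∈ B, f j = 0 := by
    simp only [hf_def, Finset.sum_sub_distrib, Finset.sum_const, hc_def]
    rw [← Nat.cast_smul_eq_nsmul ℝ, smul_smul, ← hb_def, mul_inv_cancel₀ hb.ne',
      one_smul, sub_self]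
  have hsplit : ∑ i ∈ A, f i - ∑ j ∈ B, f j = ∑ i ∈ A \ B, f i - ∑ j ∈ B \ A, f j := by
    rw [← Finset.sum_sdiff_sub_sum_sdiff]
  have hAf : a⁻¹ • ∑ i ∈ A, f i = a⁻¹ • ∑ i ∈ A, w i - c := by
    have : ∑ i ∈ A, f i = (∑ i ∈ A, w i) - A.card • c := by
      simp [hf_def, Finset.sum_sub_distrib]
    rw [this, smul_sub, ← Nat.cast_smul_eq_nsmul ℝ, smul_smul, ← ha_def,
      inv_mul_cancel₀ ha.ne', one_smul]
  have hid : a⁻¹ • ∑ i ∈ A, w i - b⁻¹ • ∑ j ∈ B, w j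
      = (a⁻¹ - b⁻¹) • ∑ i ∈ A, f i + b⁻¹ • (∑ i ∈ A \ B, f i - ∑ j ∈ B \ A, f j) := by
    rw [← hsplit, hsumB, sub_zero, ← add_smul]
    have h2 : a⁻¹ - b⁻¹ + b⁻¹ = a⁻¹ := by ring
    rw [h2, hAf, hc_def]
  rw [hid]
  have hnA : ‖∑ i ∈ A, f i‖ ≤ a * D := by
    calc ‖∑ i ∈ A, f i‖ ≤ ∑ i ∈ A, ‖f i‖ := norm_sum_le _ _
      _ ≤ ∑ _i ∈ A, D := Finset.sum_le_sum fun i hi => hf i (Finset.mem_union_left _ hi)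
      _ = a * D := by rw [Finset.sum_const, nsmul_eq_mul, ha_def]
  have hnAB : ‖∑ i ∈ A \ B, f i‖ ≤ ((A \ B).card : ℝ) * D := by
    calc ‖∑ i ∈ A \ B, f i‖ ≤ ∑ i ∈ A \ B, ‖f i‖ := norm_sum_le _ _
      _ ≤ ∑ _i ∈ A \ B, D := Finset.sum_le_sum fun i hi =>
          hf i (Finset.mem_union_left _ (Finset.mem_sdiff.mp hi).1)
      _ = _ := by rw [Finset.sum_const, nsmul_eq_mul]
  have hnBA : ‖∑ i ∈ B \ A, f i‖ ≤ ((B \ A).card : ℝ) * D := by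
    calc ‖∑ i ∈ B \ A, f i‖ ≤ ∑ i ∈ B \ A, ‖f i‖ := norm_sum_le _ _
      _ ≤ ∑ _i ∈ B \ A, D := Finset.sum_le_sum fun i hi =>
          hf i (Finset.mem_union_right _ (Finset.mem_sdiff.mp hi).1)
      _ = _ := by rw [Finset.sum_const, nsmul_eq_mul]
  have hs : 0 ≤ a⁻¹ - b⁻¹ := by
    have := inv_anti₀ ha hab
    linarith
  calc ‖(a⁻¹ - b⁻¹) • ∑ i ∈ A, f i + b⁻¹ • (∑ i ∈ A \ B, f i - ∑ j ∈ B \ A, f j)‖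
      ≤ ‖(a⁻¹ - b⁻¹) • ∑ i ∈ A, f i‖ + ‖b⁻¹ • (∑ i ∈ A \ B, f i - ∑ j ∈ B \ A, f j)‖ :=
        norm_add_le _ _
    _ ≤ (a⁻¹ - b⁻¹) * (a * D) + b⁻¹ * (((A \ B).card : ℝ) * D + ((B \ A).card : ℝ) * D) := by
        apply add_le_add
        · rw [norm_smul, Real.norm_eq_abs, abs_of_nonneg hs]
          exact mul_le_mul_of_nonneg_left hnA hs
        · rw [norm_smul, Real.norm_eq_abs, abs_of_pos (by positivity)]
          refine mul_le_mul_of_nonneg_left ?_ (by positivity)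
          exact (norm_sub_le _ _).trans (add_le_add hnAB hnBA)
    _ = D * ((b - a + ((A \ B).card : ℝ) + ((B \ A).card : ℝ)) / b) := by
        field_simp
        ring
end

section
/- There is a universal constant C > 0 with the following property. Fix an integer n ≥ 6 and τ > 0, and let v, v' : Fin n → ℝ^d be neighboring tuples. Suppose there exist j*, j'* ∈ Fin n with |{k : ‖v_k − v_{j*}‖ ≤ τ}| ≥ 2n/3 and |{k : ‖v'_k − v'_{j'*}‖ ≤ τ}| ≥ 2n/3. Let S ⊆ Fin n be the random subset that includes each index j independently with probability p_j(v), and set g = (1/|S|)·Σ_{j∈S} v_j if S is nonempty and g = 0 otherwise; define S', g' analogously from v'. Then for every ζ ∈ (0,1) there exists a probability measure Γ on ℝ^d × ℝ^d whose marginals are the laws of g and of g' respectively, such that Γ({(x,y) : ‖x − y‖ > C·τ·log(2/ζ)/n}) ≤ ζ. -/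
open MeasureTheory
open scoped BigOperators ENNReal

/-- Given an indicator vector `s` of a subset `S ⊆ Fin n`, the mean of `v` over `S`
(`0` if `S` is empty). -/
noncomputable def subsetMean {n d : ℕ} (v : Fin n → EuclideanSpace ℝ (Fin d))
    (s : Fin n → Bool) : EuclideanSpace ℝ (Fin d) :=
  let S := Finset.univ.filter fun j => s j = true
  if S.Nonempty then (S.card : ℝ)⁻¹ • ∑ j ∈ S, v j else 0
set_option maxHeartbeats 1600000

lemma selProb_eq_clamp {n d : ℕ} (hn : 0 < n) (τ : ℝ) (v : Fin n → EuclideanSpace ℝ (Fin d))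
    (j : Fin n) :
    selProb τ v j = max 0 (min 1 (((score τ v j : ℝ) - n / 2) / (n / 6))) := by
  have hn6 : (0:ℝ) < (n:ℝ)/6 := by positivity
  set f := (score τ v j : ℝ) with hf
  unfold selProb
  split_ifs with h1 h2
  · have hx : (f - n/2) / (n/6) ≤ 0 := by
      apply div_nonpos_of_nonpos_of_nonneg <;> nlinarith
    rw [min_eq_right (le_trans hx zero_le_one), max_eq_left hx]
  · have hx : (1:ℝ) ≤ (f - n/2) / (n/6) := by
      rw [le_div_iff₀ hn6]; nlinarith
    rw [min_eq_left hx, max_eq_right zero_le_one]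
  · push_neg at h1 h2
    have hx0 : (0:ℝ) ≤ (f - n/2) / (n/6) := by
      apply div_nonneg _ hn6.le; linarith
    have hx1 : (f - n/2) / (n/6) ≤ 1 := by
      rw [div_le_one hn6]; nlinarith
    rw [min_eq_right hx1, max_eq_right hx0]

lemma selProb_nonneg {n d : ℕ} (hn : 0 < n) (τ : ℝ) (v : Fin n → EuclideanSpace ℝ (Fin d))
    (j : Fin n) : 0 ≤ selProb τ v j := by
  rw [selProb_eq_clamp hn]; exact le_max_left _ _

lemma selProb_le_one {n d : ℕ} (hn : 0 < n) (τ : ℝ) (v : Fin n → EuclideanSpace ℝ (Fin d))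
    (j : Fin n) : selProb τ v j ≤ 1 := by
  rw [selProb_eq_clamp hn]; exact max_le zero_le_one (min_le_left _ _)

lemma clamp_lipschitz (x y : ℝ) : |max 0 (min 1 x) - max 0 (min 1 y)| ≤ |x - y| := by
  calc |max 0 (min 1 x) - max 0 (min 1 y)|
      = |max (min 1 x) 0 - max (min 1 y) 0| := by rw [max_comm, max_comm (0:ℝ)]
    _ ≤ |min 1 x - min 1 y| := abs_max_sub_max_le_abs _ _ _
    _ ≤ |x - y| := by
        have := abs_min_sub_min_le_max (1:ℝ) x 1 y
        simpa using this


-- score changes by at most 1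
lemma score_le_score_add_one {n d : ℕ} {τ : ℝ} {v v' : Fin n → EuclideanSpace ℝ (Fin d)}
    {j₀ j : Fin n} (hj : j ≠ j₀) (hvv' : ∀ k, k ≠ j₀ → v k = v' k) :
    score τ v' j ≤ score τ v j + 1 := by
  have hsub : {k : Fin n | ‖v' j - v' k‖ ≤ 2 * τ} ⊆
      {k : Fin n | ‖v j - v k‖ ≤ 2 * τ} ∪ {j₀} := by
    intro k hk
    by_cases hkj : k = j₀
    · exact Or.inr hkj
    · left
      rwa [Set.mem_setOf_eq, hvv' j hj, hvv' k hkj]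
  calc score τ v' j ≤ ({k : Fin n | ‖v j - v k‖ ≤ 2 * τ} ∪ {j₀}).ncard :=
        Set.ncard_le_ncard hsub (Set.toFinite _)
    _ ≤ score τ v j + ({j₀} : Set (Fin n)).ncard := Set.ncard_union_le _ _
    _ = score τ v j + 1 := by rw [Set.ncard_singleton]


-- selProb = 1 for indices near a heavy center
lemma selProb_eq_one {n d : ℕ} {τ : ℝ} (hτ : 0 < τ) {v : Fin n → EuclideanSpace ℝ (Fin d)}
    {jstar : Fin n} (hstar : (2 * n / 3 : ℝ) ≤ ({k : Fin n | ‖v k - v jstar‖ ≤ τ}.ncard : ℝ))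
    {k₀ : Fin n} (hk₀ : ‖v k₀ - v jstar‖ ≤ τ) (hn : 0 < n) :
    selProb τ v k₀ = 1 := by
  have hsub : {k : Fin n | ‖v k - v jstar‖ ≤ τ} ⊆ {k : Fin n | ‖v k₀ - v k‖ ≤ 2 * τ} := by
    intro k hk
    simp only [Set.mem_setOf_eq] at *
    calc ‖v k₀ - v k‖ = ‖(v k₀ - v jstar) - (v k - v jstar)‖ := by
          rw [sub_sub_sub_cancel_right]
      _ ≤ ‖v k₀ - v jstar‖ + ‖v k - v jstar‖ := norm_sub_le _ _
      _ ≤ 2 * τ := by linarith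
  have hsc : (2 * n / 3 : ℝ) ≤ (score τ v k₀ : ℝ) := by
    refine le_trans hstar ?_
    exact_mod_cast Nat.cast_le.mpr (Set.ncard_le_ncard hsub (Set.toFinite _))
  have hn' : (0:ℝ) < n := by exact_mod_cast hn
  rw [selProb, if_neg (by push_neg; nlinarith), if_pos hsc]

-- if selProb ≠ 0 then the point is within 3τ of the heavy center
lemma dist_center_of_selProb_ne_zero {n d : ℕ} {τ : ℝ} (hτ : 0 < τ)
    {v : Fin n → EuclideanSpace ℝ (Fin d)} {jstar : Fin n}
    (hstar : (2 * n / 3 : ℝ) ≤ ({k : Fin n | ‖v k - v jstar‖ ≤ τ}.ncard : ℝ))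
    {j : Fin n} (hj : selProb τ v j ≠ 0) (hn : 0 < n) :
    ‖v j - v jstar‖ ≤ 3 * τ := by
  have hn' : (0:ℝ) < n := by exact_mod_cast hn
  have hsc : ((n:ℝ) / 2) ≤ (score τ v j : ℝ) := by
    by_contra h
    exact hj (by rw [selProb, if_pos (by linarith)])
  -- the two sets intersect
  set A := {k : Fin n | ‖v j - v k‖ ≤ 2 * τ} with hA
  set B := {k : Fin n | ‖v k - v jstar‖ ≤ τ} with hB
  have hcards : (A ∩ B).ncard + (A ∪ B).ncard = A.ncard + B.ncard :=
    Set.ncard_inter_add_ncard_union A B (Set.toFinite _) (Set.toFinite _)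
  have hun : ((A ∪ B).ncard : ℝ) ≤ n := by
    have := Set.ncard_le_ncard (Set.subset_univ (A ∪ B)) (Set.toFinite _)
    rw [Set.ncard_univ] at this
    exact_mod_cast by simpa using this
  have hAB : (0:ℝ) < ((A ∩ B).ncard : ℝ) := by
    have h1 : ((A ∩ B).ncard : ℝ) + ((A ∪ B).ncard : ℝ) = (A.ncard : ℝ) + (B.ncard : ℝ) := by
      exact_mod_cast hcards
    have hAsc : (A.ncard : ℝ) = (score τ v j : ℝ) := rfl
    nlinarith
  have : (A ∩ B).Nonempty := by
    rw [Set.nonempty_iff_ne_empty]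
    intro h
    rw [h, Set.ncard_empty] at hAB
    simp at hAB
  obtain ⟨k, hkA, hkB⟩ := this
  rw [Set.mem_setOf_eq] at hkA hkB
  calc ‖v j - v jstar‖ = ‖(v j - v k) + (v k - v jstar)‖ := by rw [sub_add_sub_cancel]
    _ ≤ ‖v j - v k‖ + ‖v k - v jstar‖ := norm_add_le _ _
    _ ≤ 3 * τ := by linarith


noncomputable def coup (q q' : ℝ) : Measure (Bool × Bool) :=
  ENNReal.ofReal (min q q') • Measure.dirac (true, true)
    + ENNReal.ofReal (min (1 - q) (1 - q')) • Measure.dirac (false, false)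
    + ENNReal.ofReal (q - q') • Measure.dirac (true, false)
    + ENNReal.ofReal (q' - q) • Measure.dirac (false, true)

lemma ofReal_min_add (a b : ℝ) (hb : 0 ≤ b) :
    ENNReal.ofReal (min a b) + ENNReal.ofReal (a - b) = ENNReal.ofReal a := by
  rcases le_total a b with h | h
  · rw [min_eq_left h, ENNReal.ofReal_of_nonpos (sub_nonpos.mpr h), add_zero]
  · rw [min_eq_right h, ← ENNReal.ofReal_add hb (by linarith)]
    ring_nf

lemma coup_map_fst {q q' : ℝ} (hq : 0 ≤ q) (hq' : 0 ≤ q') (hq1 : q ≤ 1) (hq1' : q' ≤ 1) :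
    (coup q q').map Prod.fst = bern q := by
  rw [coup, Measure.map_add _ _ measurable_fst, Measure.map_add _ _ measurable_fst,
    Measure.map_add _ _ measurable_fst, Measure.map_smul, Measure.map_smul, Measure.map_smul,
    Measure.map_smul, Measure.map_dirac' measurable_fst, Measure.map_dirac' measurable_fst,
    Measure.map_dirac' measurable_fst, Measure.map_dirac' measurable_fst]
  have : ENNReal.ofReal (min q q') • Measure.dirac (true, true).1
        + ENNReal.ofReal (min (1 - q) (1 - q')) • Measure.dirac (false, false).1
        + ENNReal.ofReal (q - q') • Measure.dirac (true, false).1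
        + ENNReal.ofReal (q' - q) • Measure.dirac (false, true).1
      = (ENNReal.ofReal (min q q') + ENNReal.ofReal (q - q')) • Measure.dirac true
        + (ENNReal.ofReal (min (1 - q) (1 - q')) + ENNReal.ofReal (q' - q)) •
            Measure.dirac false := by
    simp only [add_smul]
    abel
  rw [this, ofReal_min_add q q' hq']
  have h2 : ENNReal.ofReal (min (1 - q) (1 - q')) + ENNReal.ofReal (q' - q)
      = ENNReal.ofReal (1 - q) := by
    have := ofReal_min_add (1 - q) (1 - q') (by linarith)
    simpa using this
  rw [h2, bern, add_comm]

lemma coup_map_snd {q q' : ℝ} (hq : 0 ≤ q) (hq' : 0 ≤ q') (hq1 : q ≤ 1) (hq1' : q' ≤ 1) :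
    (coup q q').map Prod.snd = bern q' := by
  rw [coup, Measure.map_add _ _ measurable_snd, Measure.map_add _ _ measurable_snd,
    Measure.map_add _ _ measurable_snd, Measure.map_smul, Measure.map_smul, Measure.map_smul,
    Measure.map_smul, Measure.map_dirac' measurable_snd, Measure.map_dirac' measurable_snd,
    Measure.map_dirac' measurable_snd, Measure.map_dirac' measurable_snd]
  have : ENNReal.ofReal (min q q') • Measure.dirac (true, true).2
        + ENNReal.ofReal (min (1 - q) (1 - q')) • Measure.dirac (false, false).2
        + ENNReal.ofReal (q - q') • Measure.dirac (true, false).2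
        + ENNReal.ofReal (q' - q) • Measure.dirac (false, true).2
      = (ENNReal.ofReal (min q' q) + ENNReal.ofReal (q' - q)) • Measure.dirac true
        + (ENNReal.ofReal (min (1 - q') (1 - q)) + ENNReal.ofReal (q - q')) •
            Measure.dirac false := by
    rw [min_comm q' q, min_comm (1 - q') (1 - q)]
    simp only [add_smul]
    abel
  rw [this, ofReal_min_add q' q hq]
  have h2 : ENNReal.ofReal (min (1 - q') (1 - q)) + ENNReal.ofReal (q - q')
      = ENNReal.ofReal (1 - q') := by
    have := ofReal_min_add (1 - q') (1 - q) (by linarith)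
    simpa using this
  rw [h2, bern, add_comm]

lemma bern_univ {q : ℝ} (hq : 0 ≤ q) (hq1 : q ≤ 1) : bern q Set.univ = 1 := by
  simp only [bern, Measure.add_apply, Measure.smul_apply, measure_univ, smul_eq_mul, mul_one]
  rw [← ENNReal.ofReal_add (by linarith) hq]
  norm_num

instance bern_prob {q : ℝ} : IsProbabilityMeasure (bern (max 0 (min 1 q))) := by
  constructor
  exact bern_univ (le_max_left _ _) (max_le zero_le_one (min_le_left _ _))

lemma coup_univ {q q' : ℝ} (hq : 0 ≤ q) (hq' : 0 ≤ q') (hq1 : q ≤ 1) (hq1' : q' ≤ 1) :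
    coup q q' Set.univ = 1 := by
  have h := congrArg (fun μ : Measure Bool => μ Set.univ) (coup_map_fst hq hq' hq1 hq1')
  simp only [Measure.map_apply measurable_fst MeasurableSet.univ, Set.preimage_univ] at h
  rw [h, bern_univ hq hq1]

lemma coup_prob {q q' : ℝ} (hq : 0 ≤ q) (hq' : 0 ≤ q') (hq1 : q ≤ 1) (hq1' : q' ≤ 1) :
    IsProbabilityMeasure (coup q q') := ⟨coup_univ hq hq' hq1 hq1'⟩

lemma coup_ne_le {q q' : ℝ} {ε : ℝ} (h : |q - q'| ≤ ε) :
    coup q q' {p : Bool × Bool | p.1 ≠ p.2} ≤ ENNReal.ofReal ε := by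
  have hms : MeasurableSet {p : Bool × Bool | p.1 ≠ p.2} := .of_discrete
  simp only [coup, Measure.add_apply, Measure.smul_apply, smul_eq_mul,
    Measure.dirac_apply' _ hms]
  have h1 : (true, true) ∉ {p : Bool × Bool | p.1 ≠ p.2} := by simp
  have h2 : (false, false) ∉ {p : Bool × Bool | p.1 ≠ p.2} := by simp
  have h3 : (true, false) ∈ {p : Bool × Bool | p.1 ≠ p.2} := by simp
  have h4 : (false, true) ∈ {p : Bool × Bool | p.1 ≠ p.2} := by simp
  rw [Set.indicator_of_notMem h1, Set.indicator_of_notMem h2, Set.indicator_of_mem h3,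
    Set.indicator_of_mem h4]
  simp only [mul_zero, mul_one, Pi.one_apply, zero_add, add_zero]
  rcases le_total q q' with hle | hle
  · rw [ENNReal.ofReal_of_nonpos (by linarith), zero_add]
    exact ENNReal.ofReal_le_ofReal (by rw [abs_sub_comm] at h; rw [abs_of_nonneg (by linarith)] at h; linarith)
  · rw [ENNReal.ofReal_of_nonpos (by linarith : q' - q ≤ 0), add_zero]
    exact ENNReal.ofReal_le_ofReal (by rw [abs_of_nonneg (by linarith)] at h; linarith)

lemma coup_fst_true {q q' : ℝ} (hq : 0 ≤ q) (hq' : 0 ≤ q') (hq1 : q ≤ 1) (hq1' : q' ≤ 1) :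
    coup q q' {p : Bool × Bool | p.1 = true} = ENNReal.ofReal q := by
  have : {p : Bool × Bool | p.1 = true} = Prod.fst ⁻¹' {true} := rfl
  rw [this, ← Measure.map_apply measurable_fst .of_discrete, coup_map_fst hq hq' hq1 hq1']
  simp only [bern, Measure.add_apply, Measure.smul_apply, smul_eq_mul,
    Measure.dirac_apply' _ (MeasurableSet.of_discrete (s := ({true} : Set Bool)))]
  rw [Set.indicator_of_notMem (by simp), Set.indicator_of_mem (by simp)]
  simp

lemma coup_fst_false {q q' : ℝ} (hq : 0 ≤ q) (hq' : 0 ≤ q') (hq1 : q ≤ 1) (hq1' : q' ≤ 1) :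
    coup q q' {p : Bool × Bool | p.1 = false} = ENNReal.ofReal (1 - q) := by
  have : {p : Bool × Bool | p.1 = false} = Prod.fst ⁻¹' {false} := rfl
  rw [this, ← Measure.map_apply measurable_fst .of_discrete, coup_map_fst hq hq' hq1 hq1']
  simp only [bern, Measure.add_apply, Measure.smul_apply, smul_eq_mul,
    Measure.dirac_apply' _ (MeasurableSet.of_discrete (s := ({false} : Set Bool)))]
  rw [Set.indicator_of_mem (by simp), Set.indicator_of_notMem (by simp)]
  simp

lemma coup_snd_true {q q' : ℝ} (hq : 0 ≤ q) (hq' : 0 ≤ q') (hq1 : q ≤ 1) (hq1' : q' ≤ 1) :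
    coup q q' {p : Bool × Bool | p.2 = true} = ENNReal.ofReal q' := by
  have : {p : Bool × Bool | p.2 = true} = Prod.snd ⁻¹' {true} := rfl
  rw [this, ← Measure.map_apply measurable_snd .of_discrete, coup_map_snd hq hq' hq1 hq1']
  simp only [bern, Measure.add_apply, Measure.smul_apply, smul_eq_mul,
    Measure.dirac_apply' _ (MeasurableSet.of_discrete (s := ({true} : Set Bool)))]
  rw [Set.indicator_of_notMem (by simp), Set.indicator_of_mem (by simp)]
  simp

lemma coup_snd_false {q q' : ℝ} (hq : 0 ≤ q) (hq' : 0 ≤ q') (hq1 : q ≤ 1) (hq1' : q' ≤ 1) :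
    coup q q' {p : Bool × Bool | p.2 = false} = ENNReal.ofReal (1 - q') := by
  have : {p : Bool × Bool | p.2 = false} = Prod.snd ⁻¹' {false} := rfl
  rw [this, ← Measure.map_apply measurable_snd .of_discrete, coup_map_snd hq hq' hq1 hq1']
  simp only [bern, Measure.add_apply, Measure.smul_apply, smul_eq_mul,
    Measure.dirac_apply' _ (MeasurableSet.of_discrete (s := ({false} : Set Bool)))]
  rw [Set.indicator_of_mem (by simp), Set.indicator_of_notMem (by simp)]
  simp


lemma pi_cyl {n : ℕ} (γ : Fin n → Measure (Bool × Bool)) [∀ j, IsProbabilityMeasure (γ j)]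
    (U : Finset (Fin n)) (A : Set (Bool × Bool)) :
    Measure.pi γ {ω : Fin n → Bool × Bool | ∀ j ∈ U, ω j ∈ A} = ∏ j ∈ U, γ j A := by
  classical
  have hset : {ω : Fin n → Bool × Bool | ∀ j ∈ U, ω j ∈ A}
      = Set.pi Set.univ (fun i => if i ∈ U then A else Set.univ) := by
    ext ω
    simp only [Set.mem_setOf_eq, Set.mem_pi, Set.mem_univ, forall_true_left]
    constructor
    · intro h i
      by_cases hi : i ∈ U
      · simpa [hi] using h i hi
      · simp [hi]
    · intro h j hj
      have := h j
      simpa [hj] using this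
  rw [hset, Measure.pi_pi]
  have : ∀ i, γ i (if i ∈ U then A else Set.univ) = if i ∈ U then γ i A else 1 := by
    intro i
    by_cases hi : i ∈ U <;> simp [hi]
  simp only [this]
  rw [Finset.prod_ite_mem Finset.univ U (fun i => γ i A), Finset.univ_inter]



lemma scalar_final {tau N K M ia ia' x1 x2 x3 x4 : ℝ} (htau : 0 < tau) (hN : 0 < N)
    (hK1 : 1 ≤ K) (hM0 : 0 ≤ M) (hMK : M ≤ K)
    (hia0 : 0 ≤ ia) (hia0' : 0 ≤ ia') (hia : ia ≤ 3/(2*N)) (hia' : ia' ≤ 3/(2*N))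
    (h1 : x1 ≤ 3*tau*M*ia') (h2 : x2 ≤ ia'*(8*tau)) (h3 : x3 ≤ ia*(3*tau*M))
    (h4 : x4 ≤ ia'*(5*tau*M)) :
    x1 + x2 + x3 + x4 ≤ 29*tau*K/N := by
  have e : (0:ℝ) < 3/(2*N) := by positivity
  have b1 : 3*tau*M*ia' ≤ (3*tau*M)*(3/(2*N)) :=
    mul_le_mul_of_nonneg_left hia' (by positivity)
  have b2 : ia'*(8*tau) ≤ (8*tau)*(3/(2*N)) := by
    rw [mul_comm]; exact mul_le_mul_of_nonneg_left hia' (by positivity)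
  have b3 : ia*(3*tau*M) ≤ (3*tau*M)*(3/(2*N)) := by
    rw [mul_comm]; exact mul_le_mul_of_nonneg_left hia (by positivity)
  have b4 : ia'*(5*tau*M) ≤ (5*tau*M)*(3/(2*N)) := by
    rw [mul_comm]; exact mul_le_mul_of_nonneg_left hia' (by positivity)
  have hsum : x1 + x2 + x3 + x4 ≤ (11*tau*M + 8*tau)*(3/(2*N)) := by nlinarith
  refine le_trans hsum ?_
  have hrw : (11*tau*M + 8*tau)*(3/(2*N)) = (33*tau*M + 24*tau)/(2*N) := by ring
  rw [hrw, div_le_div_iff₀ (by positivity : (0:ℝ) < 2*N) hN]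
  have hq : tau*M ≤ tau*K := by nlinarith
  have hq1 : tau ≤ tau*K := by nlinarith
  nlinarith [mul_le_mul_of_nonneg_right hq hN.le, mul_le_mul_of_nonneg_right hq1 hN.le]

lemma mean_diff_bound {n d : ℕ} (hn : 6 ≤ n) {τ : ℝ} (hτ : 0 < τ)
    (v v' : Fin n → EuclideanSpace ℝ (Fin d)) (j₀ : Fin n)
    (hvv' : ∀ j, j ≠ j₀ → v j = v' j)
    (c c' : EuclideanSpace ℝ (Fin d)) (hcc' : ‖c - c'‖ ≤ 2 * τ)
    (s s' : Fin n → Bool)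
    (hs : ∀ j, s j = true → ‖v j - c‖ ≤ 3 * τ)
    (hs' : ∀ j, s' j = true → ‖v' j - c'‖ ≤ 3 * τ)
    (hcard : (2 * n / 3 : ℝ) ≤ ((Finset.univ.filter fun j => s j = true).card : ℝ))
    (hcard' : (2 * n / 3 : ℝ) ≤ ((Finset.univ.filter fun j => s' j = true).card : ℝ))
    (W : Finset (Fin n)) (hW : ∀ j, j ≠ j₀ → s j ≠ s' j → j ∈ W) :
    ‖subsetMean v s - subsetMean v' s'‖ ≤ 29 * τ * (W.card + 1) / n := by
  have hn' : (0:ℝ) < n := by positivity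
  set S := Finset.univ.filter (fun j => s j = true) with hSdef
  set S' := Finset.univ.filter (fun j => s' j = true) with hSdef'
  set a : ℝ := (S.card : ℝ) with ha
  set a' : ℝ := (S'.card : ℝ) with ha'
  have ha0 : (0:ℝ) < a := lt_of_lt_of_le (by nlinarith) hcard
  have ha0' : (0:ℝ) < a' := lt_of_lt_of_le (by nlinarith) hcard'
  have hane : a ≠ 0 := ne_of_gt ha0
  have hane' : a' ≠ 0 := ne_of_gt ha0'
  have hSne : S.Nonempty := Finset.card_pos.mp (by rw [ha] at ha0; exact_mod_cast ha0)
  have hSne' : S'.Nonempty := Finset.card_pos.mp (by rw [ha'] at ha0'; exact_mod_cast ha0')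
  have hia : a⁻¹ ≤ 3 / (2 * n) := by
    have h1 : a⁻¹ ≤ (2 * n / 3 : ℝ)⁻¹ :=
      inv_anti₀ (by positivity) hcard
    calc a⁻¹ ≤ (2 * n / 3 : ℝ)⁻¹ := h1
      _ = 3 / (2 * n) := by field_simp
  have hia' : a'⁻¹ ≤ 3 / (2 * n) := by
    have h1 : a'⁻¹ ≤ (2 * n / 3 : ℝ)⁻¹ :=
      inv_anti₀ (by positivity) hcard'
    calc a'⁻¹ ≤ (2 * n / 3 : ℝ)⁻¹ := h1
      _ = 3 / (2 * n) := by field_simp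
  -- membership facts
  have hmemS : ∀ j ∈ S, s j = true := fun j hj => (Finset.mem_filter.mp hj).2
  have hmemS' : ∀ j ∈ S', s' j = true := fun j hj => (Finset.mem_filter.mp hj).2
  -- unfold subsetMean
  have hmean : subsetMean v s = a⁻¹ • ∑ j ∈ S, v j := by
    simp only [subsetMean, ← hSdef, if_pos hSne, ha]
  have hmean' : subsetMean v' s' = a'⁻¹ • ∑ j ∈ S', v' j := by
    simp only [subsetMean, ← hSdef', if_pos hSne', ha']
  -- recenter
  have recenter : ∀ (T : Finset (Fin n)) (u : Fin n → EuclideanSpace ℝ (Fin d)),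
      (T.card : ℝ) ≠ 0 →
      (T.card : ℝ)⁻¹ • ∑ j ∈ T, u j - c = (T.card : ℝ)⁻¹ • ∑ j ∈ T, (u j - c) := by
    intro T u hT
    rw [Finset.sum_sub_distrib, Finset.sum_const, smul_sub]
    congr 1
    rw [← Nat.cast_smul_eq_nsmul ℝ, smul_smul, inv_mul_cancel₀ hT, one_smul]
  -- decomposition
  set X := ∑ j ∈ S ∩ S', (v j - c) with hX
  set X' := ∑ j ∈ S ∩ S', (v' j - c) with hX'
  set Y := ∑ j ∈ S \ S', (v j - c) with hY
  set Y' := ∑ j ∈ S' \ S, (v' j - c) with hY'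
  have hsplit : ∑ j ∈ S, (v j - c) = X + Y := (Finset.sum_inter_add_sum_sdiff S S' _).symm
  have hsplit' : ∑ j ∈ S', (v' j - c) = X' + Y' := by
    rw [← Finset.sum_inter_add_sum_sdiff S' S (fun j => v' j - c), Finset.inter_comm]
  -- cardinality facts
  set M : ℕ := (S \ S').card + (S' \ S).card with hM
  have hMW : (M : ℝ) ≤ (W.card : ℝ) + 1 := by
    have hsub : (S \ S') ∪ (S' \ S) ⊆ insert j₀ W := by
      intro j hj
      rcases Finset.mem_union.mp hj with hj1 | hj1
      · have h1 : s j = true := hmemS j (Finset.mem_sdiff.mp hj1).1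
        have h2 : s' j ≠ true := fun h => (Finset.mem_sdiff.mp hj1).2
          (Finset.mem_filter.mpr ⟨Finset.mem_univ _, h⟩)
        by_cases hjj : j = j₀
        · exact Finset.mem_insert.mpr (Or.inl hjj)
        · exact Finset.mem_insert.mpr (Or.inr (hW j hjj (by rw [h1]; exact fun h => h2 h.symm)))
      · have h1 : s' j = true := hmemS' j (Finset.mem_sdiff.mp hj1).1
        have h2 : s j ≠ true := fun h => (Finset.mem_sdiff.mp hj1).2
          (Finset.mem_filter.mpr ⟨Finset.mem_univ _, h⟩)
        by_cases hjj : j = j₀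
        · exact Finset.mem_insert.mpr (Or.inl hjj)
        · exact Finset.mem_insert.mpr (Or.inr (hW j hjj (by rw [h1]; exact h2)))
    have hdisj : Disjoint (S \ S') (S' \ S) := disjoint_sdiff_sdiff
    have : M = ((S \ S') ∪ (S' \ S)).card := (Finset.card_union_of_disjoint hdisj).symm
    rw [this]
    have hc := Finset.card_le_card hsub
    have hc2 := Finset.card_insert_le j₀ W
    exact_mod_cast le_trans (Nat.cast_le.mpr hc) (by exact_mod_cast hc2)
  have haa' : |a - a'| ≤ (M : ℝ) := by
    have h1 : (S ∩ S').card + (S \ S').card = S.card := Finset.card_inter_add_card_sdiff S S'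
    have h2 : (S ∩ S').card + (S' \ S).card = S'.card := by
      rw [Finset.inter_comm]; exact Finset.card_inter_add_card_sdiff S' S
    rw [abs_le]
    constructor <;>
      · simp only [ha, ha', hM]
        push_cast [← h1, ← h2]
        push_cast
        linarith
  -- norm bounds
  have hXb : ‖X‖ ≤ 3 * τ * a := by
    calc ‖X‖ ≤ ∑ j ∈ S ∩ S', ‖v j - c‖ := norm_sum_le _ _
      _ ≤ ∑ _j ∈ S ∩ S', 3 * τ := Finset.sum_le_sum fun j hj =>
          hs j (hmemS j (Finset.mem_inter.mp hj).1)
      _ = ((S ∩ S').card : ℝ) * (3 * τ) := by rw [Finset.sum_const, nsmul_eq_mul]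
      _ ≤ a * (3 * τ) := by
          have : ((S ∩ S').card : ℝ) ≤ a :=
            Nat.cast_le.mpr (Finset.card_le_card (Finset.inter_subset_left))
          nlinarith
      _ = 3 * τ * a := by ring
  have hYb : ‖Y‖ ≤ 3 * τ * M := by
    calc ‖Y‖ ≤ ∑ j ∈ S \ S', ‖v j - c‖ := norm_sum_le _ _
      _ ≤ ∑ _j ∈ S \ S', 3 * τ := Finset.sum_le_sum fun j hj =>
          hs j (hmemS j (Finset.mem_sdiff.mp hj).1)
      _ = ((S \ S').card : ℝ) * (3 * τ) := by rw [Finset.sum_const, nsmul_eq_mul]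
      _ ≤ 3 * τ * M := by
          have : ((S \ S').card : ℝ) ≤ (M : ℝ) := by exact_mod_cast Nat.le_add_right _ _
          nlinarith
  have hY'b : ‖Y'‖ ≤ 5 * τ * M := by
    calc ‖Y'‖ ≤ ∑ j ∈ S' \ S, ‖v' j - c‖ := norm_sum_le _ _
      _ ≤ ∑ _j ∈ S' \ S, 5 * τ := by
          refine Finset.sum_le_sum fun j hj => ?_
          have h1 : ‖v' j - c'‖ ≤ 3 * τ := hs' j (hmemS' j (Finset.mem_sdiff.mp hj).1)
          calc ‖v' j - c‖ = ‖(v' j - c') + (c' - c)‖ := by rw [sub_add_sub_cancel]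
            _ ≤ ‖v' j - c'‖ + ‖c' - c‖ := norm_add_le _ _
            _ ≤ 3 * τ + 2 * τ := by rw [norm_sub_rev c' c]; exact add_le_add h1 hcc'
            _ = 5 * τ := by ring
      _ = ((S' \ S).card : ℝ) * (5 * τ) := by rw [Finset.sum_const, nsmul_eq_mul]
      _ ≤ 5 * τ * M := by
          have : ((S' \ S).card : ℝ) ≤ (M : ℝ) := by exact_mod_cast Nat.le_add_left _ _
          nlinarith
  have hXX' : ‖X - X'‖ ≤ 8 * τ := by
    have hXsub : X - X' = ∑ j ∈ S ∩ S', (v j - v' j) := by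
      rw [hX, hX', ← Finset.sum_sub_distrib]
      exact Finset.sum_congr rfl fun j _ => sub_sub_sub_cancel_right _ _ _
    rw [hXsub]
    calc ‖∑ j ∈ S ∩ S', (v j - v' j)‖ ≤ ∑ j ∈ S ∩ S', ‖v j - v' j‖ := norm_sum_le _ _
      _ ≤ ∑ j ∈ S ∩ S', (if j = j₀ then 8 * τ else 0) := by
          refine Finset.sum_le_sum fun j hj => ?_
          by_cases hjj : j = j₀
          · subst hjj
            rw [if_pos rfl]
            have h1 : ‖v j - c‖ ≤ 3 * τ := hs j (hmemS j (Finset.mem_inter.mp hj).1)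
            have h2 : ‖v' j - c'‖ ≤ 3 * τ := hs' j (hmemS' j (Finset.mem_inter.mp hj).2)
            calc ‖v j - v' j‖ = ‖(v j - c) + (c - c') + (c' - v' j)‖ := by
                  rw [sub_add_sub_cancel, sub_add_sub_cancel]
              _ ≤ ‖v j - c‖ + ‖c - c'‖ + ‖c' - v' j‖ :=
                  le_trans (norm_add_le _ _) (by gcongr; exact norm_add_le _ _)
              _ ≤ 3 * τ + 2 * τ + 3 * τ := by
                  rw [norm_sub_rev c']
                  exact add_le_add (add_le_add h1 hcc') h2
              _ = 8 * τ := by ring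
          · rw [if_neg hjj, hvv' j hjj, sub_self, norm_zero]
      _ ≤ 8 * τ := by
          rw [Finset.sum_ite_eq' (S ∩ S') j₀ (fun _ => 8 * τ)]
          split_ifs
          · exact le_refl _
          · positivity
  -- the algebraic identity
  have hid : subsetMean v s - subsetMean v' s'
      = (a⁻¹ - a'⁻¹) • X + a'⁻¹ • (X - X') + a⁻¹ • Y - a'⁻¹ • Y' := by
    rw [hmean, hmean']
    have e1 : a⁻¹ • ∑ j ∈ S, v j - a'⁻¹ • ∑ j ∈ S', v' j
        = (a⁻¹ • ∑ j ∈ S, v j - c) - (a'⁻¹ • ∑ j ∈ S', v' j - c) := by abel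
    rw [e1, recenter S v hane, recenter S' v' hane', hsplit, hsplit']
    module
  rw [hid]
  -- final numeric bound
  have habsinv : |a⁻¹ - a'⁻¹| ≤ (M : ℝ) * (a⁻¹ * a'⁻¹) := by
    have heq : a⁻¹ - a'⁻¹ = (a' - a) * (a⁻¹ * a'⁻¹) := by field_simp
    have hpos : (0:ℝ) ≤ a⁻¹ * a'⁻¹ := by positivity
    calc |a⁻¹ - a'⁻¹| = |a' - a| * (a⁻¹ * a'⁻¹) := by rw [heq, abs_mul, abs_of_nonneg hpos]
      _ = |a - a'| * (a⁻¹ * a'⁻¹) := by rw [abs_sub_comm]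
      _ ≤ (M : ℝ) * (a⁻¹ * a'⁻¹) := mul_le_mul_of_nonneg_right haa' hpos
  have hterm1 : ‖(a⁻¹ - a'⁻¹) • X‖ ≤ 3 * τ * M * a'⁻¹ := by
    rw [norm_smul, Real.norm_eq_abs]
    calc |a⁻¹ - a'⁻¹| * ‖X‖ ≤ ((M : ℝ) * (a⁻¹ * a'⁻¹)) * (3 * τ * a) := by
          have hh : (0:ℝ) ≤ (M : ℝ) * (a⁻¹ * a'⁻¹) := by positivity
          exact mul_le_mul habsinv hXb (norm_nonneg _) hh
      _ = 3 * τ * M * a'⁻¹ * (a⁻¹ * a) := by ring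
      _ = 3 * τ * M * a'⁻¹ := by rw [inv_mul_cancel₀ hane, mul_one]
  have hterm2 : ‖a'⁻¹ • (X - X')‖ ≤ a'⁻¹ * (8 * τ) := by
    rw [norm_smul, Real.norm_eq_abs, abs_of_nonneg (by positivity : (0:ℝ) ≤ a'⁻¹)]
    exact mul_le_mul_of_nonneg_left hXX' (by positivity)
  have hterm3 : ‖a⁻¹ • Y‖ ≤ a⁻¹ * (3 * τ * M) := by
    rw [norm_smul, Real.norm_eq_abs, abs_of_nonneg (by positivity : (0:ℝ) ≤ a⁻¹)]
    exact mul_le_mul_of_nonneg_left hYb (by positivity)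
  have hterm4 : ‖a'⁻¹ • Y'‖ ≤ a'⁻¹ * (5 * τ * M) := by
    rw [norm_smul, Real.norm_eq_abs, abs_of_nonneg (by positivity : (0:ℝ) ≤ a'⁻¹)]
    exact mul_le_mul_of_nonneg_left hY'b (by positivity)
  have htot : ‖(a⁻¹ - a'⁻¹) • X + a'⁻¹ • (X - X') + a⁻¹ • Y - a'⁻¹ • Y'‖
      ≤ 3 * τ * M * a'⁻¹ + a'⁻¹ * (8 * τ) + a⁻¹ * (3 * τ * M) + a'⁻¹ * (5 * τ * M) := by
    calc ‖(a⁻¹ - a'⁻¹) • X + a'⁻¹ • (X - X') + a⁻¹ • Y - a'⁻¹ • Y'‖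
        ≤ ‖(a⁻¹ - a'⁻¹) • X + a'⁻¹ • (X - X') + a⁻¹ • Y‖ + ‖a'⁻¹ • Y'‖ := norm_sub_le _ _
      _ ≤ ‖(a⁻¹ - a'⁻¹) • X + a'⁻¹ • (X - X')‖ + ‖a⁻¹ • Y‖ + ‖a'⁻¹ • Y'‖ := by
          gcongr; exact norm_add_le _ _
      _ ≤ ‖(a⁻¹ - a'⁻¹) • X‖ + ‖a'⁻¹ • (X - X')‖ + ‖a⁻¹ • Y‖ + ‖a'⁻¹ • Y'‖ := by
          gcongr; exact norm_add_le _ _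
      _ ≤ _ := by gcongr
  refine le_trans htot ?_
  have hgoal := scalar_final (tau := τ) (N := (n:ℝ)) (K := (W.card:ℝ)+1) (M := (M:ℝ))
    (ia := a⁻¹) (ia' := a'⁻¹)
    (x1 := 3 * τ * M * a'⁻¹) (x2 := a'⁻¹ * (8 * τ)) (x3 := a⁻¹ * (3 * τ * M))
    (x4 := a'⁻¹ * (5 * τ * M))
    hτ hn' (by have := Nat.cast_nonneg (α := ℝ) W.card; linarith) (Nat.cast_nonneg _) hMW
    (by positivity) (by positivity)
    hia hia' (le_refl _) (le_refl _) (le_refl _) (le_refl _)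
  exact_mod_cast hgoal


lemma pow12 (t : ℕ) : 12^t ≤ 12^12 * t.factorial := by
  induction t with
  | zero => norm_num
  | succ t ih =>
    by_cases h : 12 ≤ t + 1
    · calc 12^(t+1) = 12 * 12^t := by ring
        _ ≤ 12 * (12^12 * t.factorial) := Nat.mul_le_mul_left _ ih
        _ ≤ (t+1) * (12^12 * t.factorial) := Nat.mul_le_mul_right _ h
        _ = 12^12 * (t+1).factorial := by rw [Nat.factorial_succ]; ring
    · have ht : t + 1 ≤ 12 := by omega
      calc 12^(t+1) ≤ 12^12 := Nat.pow_le_pow_right (by norm_num) ht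
        _ ≤ 12^12 * (t+1).factorial :=
          Nat.le_mul_of_pos_right _ (Nat.factorial_pos _)

lemma tail_bound {n : ℕ} (hn : 6 ≤ n) {ζ : ℝ} (hζ0 : 0 < ζ) (hζ1 : ζ < 1) :
    ((n-1).choose (⌈100 * Real.log (2/ζ)⌉₊) : ℝ)
      * (6/n)^(⌈100 * Real.log (2/ζ)⌉₊) ≤ ζ := by
  set t := ⌈100 * Real.log (2/ζ)⌉₊ with ht
  have hn0 : (0:ℝ) < n := by positivity
  have hfac : (0:ℝ) < (t.factorial : ℝ) := by exact_mod_cast Nat.factorial_pos t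
  have hlog2 : (0.6931471803 : ℝ) < Real.log 2 := Real.log_two_gt_d9
  have hlogζ : Real.log ζ < 0 := Real.log_neg hζ0 hζ1
  have hL : Real.log (2/ζ) = Real.log 2 - Real.log ζ :=
    Real.log_div (by norm_num) (ne_of_gt hζ0)
  have htL : 100 * Real.log (2/ζ) ≤ (t : ℝ) := Nat.le_ceil _
  -- step 1 : choose bound
  have hnat : t.factorial * (n-1).choose t ≤ n^t := by
    calc t.factorial * (n-1).choose t = (n-1).descFactorial t :=
          (Nat.descFactorial_eq_factorial_mul_choose _ _).symm
      _ ≤ (n-1)^t := Nat.descFactorial_le_pow _ _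
      _ ≤ n^t := Nat.pow_le_pow_left (Nat.sub_le _ _) _
  have hchoose : ((n-1).choose t : ℝ) ≤ (n:ℝ)^t / (t.factorial : ℝ) := by
    rw [le_div_iff₀ hfac]
    calc ((n-1).choose t : ℝ) * (t.factorial : ℝ) = ((t.factorial * (n-1).choose t : ℕ) : ℝ) := by
          push_cast; ring
      _ ≤ ((n^t : ℕ) : ℝ) := by exact_mod_cast hnat
      _ = (n:ℝ)^t := by push_cast; ring
  have step1 : ((n-1).choose t : ℝ) * (6/n)^t ≤ (6:ℝ)^t / (t.factorial : ℝ) := by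
    have hp : (0:ℝ) ≤ (6/(n:ℝ))^t := by positivity
    calc ((n-1).choose t : ℝ) * (6/n)^t ≤ ((n:ℝ)^t / (t.factorial : ℝ)) * (6/n)^t :=
          mul_le_mul_of_nonneg_right hchoose hp
      _ = (6:ℝ)^t / (t.factorial : ℝ) := by
          rw [div_pow]
          field_simp
  -- step 2 : 6^t/t! ≤ 12^12 / 2^t
  have step2 : (6:ℝ)^t / (t.factorial : ℝ) ≤ (12:ℝ)^12 / (2:ℝ)^t := by
    rw [div_le_div_iff₀ hfac (by positivity)]
    have h12 : (12:ℝ)^t ≤ (12:ℝ)^12 * (t.factorial : ℝ) := by exact_mod_cast pow12 t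
    calc (6:ℝ)^t * (2:ℝ)^t = (12:ℝ)^t := by rw [← mul_pow]; norm_num
      _ ≤ (12:ℝ)^12 * (t.factorial : ℝ) := h12
  -- step 3 : 12^12 / 2^t ≤ ζ
  have step3 : (12:ℝ)^12 / (2:ℝ)^t ≤ ζ := by
    rw [div_le_iff₀ (by positivity : (0:ℝ) < (2:ℝ)^t)]
    have hpos1 : (0:ℝ) < (12:ℝ)^12 := by positivity
    have hpos2 : (0:ℝ) < ζ * (2:ℝ)^t := by positivity
    rw [← Real.log_le_log_iff hpos1 hpos2, Real.log_mul (ne_of_gt hζ0) (by positivity),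
      Real.log_pow, Real.log_pow]
    -- goal : 12 * log 12 ≤ log ζ + t * log 2
    have hlog12 : Real.log 12 ≤ 4 * Real.log 2 := by
      calc Real.log 12 ≤ Real.log 16 := Real.log_le_log (by norm_num) (by norm_num)
        _ = Real.log (2^4) := by norm_num
        _ = 4 * Real.log 2 := by rw [Real.log_pow]; push_cast; ring
    have h1 : (100 * Real.log (2/ζ)) * Real.log 2 ≤ (t:ℝ) * Real.log 2 :=
      mul_le_mul_of_nonneg_right htL (by linarith)
    rw [hL] at h1
    have key1 : 48 * Real.log 2 ≤ 100 * Real.log 2 * Real.log 2 := by nlinarith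
    have key2 : -Real.log ζ ≤ -(100 * Real.log 2 * Real.log ζ) := by nlinarith
    push_cast
    nlinarith
  calc ((n-1).choose t : ℝ) * (6/n)^t ≤ (6:ℝ)^t / (t.factorial : ℝ) := step1
    _ ≤ (12:ℝ)^12 / (2:ℝ)^t := step2
    _ ≤ ζ := step3
open Classical in
lemma selProb_diff_le {n d : ℕ} (hn : 6 ≤ n) (τ : ℝ) {v v' : Fin n → EuclideanSpace ℝ (Fin d)}
    {j₀ j : Fin n} (hj : j ≠ j₀) (hvv' : ∀ k, k ≠ j₀ → v k = v' k) :
    |selProb τ v j - selProb τ v' j| ≤ 6 / n := by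
  have hn0 : 0 < n := by omega
  have hn' : (0:ℝ) < n := by positivity
  have h1 : score τ v' j ≤ score τ v j + 1 := score_le_score_add_one hj hvv'
  have h2 : score τ v j ≤ score τ v' j + 1 :=
    score_le_score_add_one hj (fun k hk => (hvv' k hk).symm)
  rw [selProb_eq_clamp hn0, selProb_eq_clamp hn0]
  refine le_trans (clamp_lipschitz _ _) ?_
  have heq : ((score τ v j:ℝ) - n/2)/(n/6) - ((score τ v' j:ℝ) - n/2)/(n/6)
      = ((score τ v j:ℝ) - (score τ v' j)) / (n/6) := by ring
  rw [heq, abs_div, abs_of_pos (by positivity : (0:ℝ) < (n:ℝ)/6)]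
  have habs : |(score τ v j:ℝ) - (score τ v' j:ℝ)| ≤ 1 := by
    rw [abs_le]
    have c1 : (score τ v' j : ℝ) ≤ (score τ v j : ℝ) + 1 := by exact_mod_cast h1
    have c2 : (score τ v j : ℝ) ≤ (score τ v' j : ℝ) + 1 := by exact_mod_cast h2
    constructor <;> linarith
  calc |(score τ v j:ℝ) - (score τ v' j)| / ((n:ℝ)/6) ≤ 1 / ((n:ℝ)/6) := by
        apply div_le_div_of_nonneg_right habs (by positivity)
        -- fallback
      _ = 6 / n := by field_simp
      
theorem stmt5 : ∃ C : ℝ, 0 < C ∧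
    ∀ (d n : ℕ), 6 ≤ n → ∀ τ : ℝ, 0 < τ →
    ∀ (v v' : Fin n → EuclideanSpace ℝ (Fin d)),
    (∃ j₀ : Fin n, v j₀ ≠ v' j₀ ∧ ∀ j, j ≠ j₀ → v j = v' j) →
    (∃ jstar : Fin n, (2 * n / 3 : ℝ) ≤ ({k : Fin n | ‖v k - v jstar‖ ≤ τ}.ncard : ℝ)) →
    (∃ jstar' : Fin n, (2 * n / 3 : ℝ) ≤ ({k : Fin n | ‖v' k - v' jstar'‖ ≤ τ}.ncard : ℝ)) →
    ∀ ζ : ℝ, ζ ∈ Set.Ioo (0 : ℝ) 1 →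
    ∃ Γ : Measure (EuclideanSpace ℝ (Fin d) × EuclideanSpace ℝ (Fin d)),
      IsProbabilityMeasure Γ ∧
      Γ.map Prod.fst = (Measure.pi fun j => bern (selProb τ v j)).map (subsetMean v) ∧
      Γ.map Prod.snd = (Measure.pi fun j => bern (selProb τ v' j)).map (subsetMean v') ∧
      Γ {xy | C * τ * Real.log (2 / ζ) / n < ‖xy.1 - xy.2‖} ≤ ENNReal.ofReal ζ := by
  classical
  refine ⟨3000, by norm_num, ?_⟩
  rintro d n hn τ hτ v v' ⟨j₀, hj₀ne, hj₀eq⟩ ⟨jstar, hstar⟩ ⟨jstar', hstar'⟩ ζ ⟨hζ0, hζ1⟩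
  have hn0 : 0 < n := by omega
  have hn' : (0:ℝ) < n := by positivity
  set p : Fin n → ℝ := fun j => selProb τ v j with hp
  set p' : Fin n → ℝ := fun j => selProb τ v' j with hp'
  have hp0 : ∀ j, 0 ≤ p j := fun j => selProb_nonneg hn0 τ v j
  have hp1 : ∀ j, p j ≤ 1 := fun j => selProb_le_one hn0 τ v j
  have hp0' : ∀ j, 0 ≤ p' j := fun j => selProb_nonneg hn0 τ v' j
  have hp1' : ∀ j, p' j ≤ 1 := fun j => selProb_le_one hn0 τ v' j
  set γ : Fin n → Measure (Bool × Bool) := fun j => coup (p j) (p' j) with hγ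
  haveI hγprob : ∀ j, IsProbabilityMeasure (γ j) :=
    fun j => coup_prob (hp0 j) (hp0' j) (hp1 j) (hp1' j)
  haveI hbprob : ∀ j, IsProbabilityMeasure (bern (p j)) :=
    fun j => ⟨bern_univ (hp0 j) (hp1 j)⟩
  haveI hbprob' : ∀ j, IsProbabilityMeasure (bern (p' j)) :=
    fun j => ⟨bern_univ (hp0' j) (hp1' j)⟩
  set F : (Fin n → Bool × Bool) → EuclideanSpace ℝ (Fin d) × EuclideanSpace ℝ (Fin d) :=
    fun ω => (subsetMean v (fun j => (ω j).1), subsetMean v' (fun j => (ω j).2)) with hF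
  refine ⟨(Measure.pi γ).map F, ?_, ?_, ?_, ?_⟩
  · exact Measure.isProbabilityMeasure_map (Measurable.of_discrete (f := F)).aemeasurable
  · -- first marginal
    have hmp : MeasurePreserving (fun (ω : Fin n → Bool × Bool) j => (ω j).1)
        (Measure.pi γ) (Measure.pi (fun j => bern (p j))) :=
      measurePreserving_pi γ (fun j => bern (p j))
        (fun j => ⟨measurable_fst, coup_map_fst (hp0 j) (hp0' j) (hp1 j) (hp1' j)⟩)
    rw [Measure.map_map measurable_fst (Measurable.of_discrete (f := F))]
    have hcomp : Prod.fst ∘ F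
        = (subsetMean v) ∘ (fun (ω : Fin n → Bool × Bool) j => (ω j).1) := rfl
    rw [hcomp, ← Measure.map_map (Measurable.of_discrete (f := subsetMean v))
      (Measurable.of_discrete), hmp.map_eq]
  · -- second marginal
    have hmp : MeasurePreserving (fun (ω : Fin n → Bool × Bool) j => (ω j).2)
        (Measure.pi γ) (Measure.pi (fun j => bern (p' j))) :=
      measurePreserving_pi γ (fun j => bern (p' j))
        (fun j => ⟨measurable_snd, coup_map_snd (hp0 j) (hp0' j) (hp1 j) (hp1' j)⟩)
    rw [Measure.map_map measurable_snd (Measurable.of_discrete (f := F))]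
    have hcomp : Prod.snd ∘ F
        = (subsetMean v') ∘ (fun (ω : Fin n → Bool × Bool) j => (ω j).2) := rfl
    rw [hcomp, ← Measure.map_map (Measurable.of_discrete (f := subsetMean v'))
      (Measurable.of_discrete), hmp.map_eq]
  · -- the main bound
    set L : ℝ := Real.log (2 / ζ) with hLdef
    have hlog2 : (0.6931471803 : ℝ) < Real.log 2 := Real.log_two_gt_d9
    have hL2 : Real.log 2 ≤ L := by
      apply Real.log_le_log (by norm_num)
      rw [le_div_iff₀ hζ0]; nlinarith
    have hL0 : 0 < L := by linarith
    set t : ℕ := ⌈100 * L⌉₊ with htdef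
    have ht1 : 1 ≤ t := by
      rw [htdef]
      exact Nat.one_le_ceil_iff.mpr (by positivity)
    have htL : 100 * L ≤ (t:ℝ) := Nat.le_ceil _
    have htU : (t:ℝ) ≤ 100 * L + 1 := le_of_lt (Nat.ceil_lt_add_one (by positivity))
    -- the per-coordinate singleton helper
    have hsingle : ∀ (j : Fin n) (A : Set (Bool × Bool)),
        Measure.pi γ {ω | ω j ∈ A} = γ j A := by
      intro j A
      have hset : {ω : Fin n → Bool × Bool | ω j ∈ A}
          = {ω : Fin n → Bool × Bool | ∀ k ∈ ({j} : Finset (Fin n)), ω k ∈ A} := by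
        ext ω; simp
      rw [hset, pi_cyl γ ({j} : Finset (Fin n)) A, Finset.prod_singleton]
    -- null sets
    set B1 : Set (Fin n → Bool × Bool) := {ω | ∃ j, p j = 0 ∧ (ω j).1 = true} with hB1
    set B2 : Set (Fin n → Bool × Bool) :=
      {ω | ∃ k, ‖v k - v jstar‖ ≤ τ ∧ (ω k).1 = false} with hB2
    set B3 : Set (Fin n → Bool × Bool) := {ω | ∃ j, p' j = 0 ∧ (ω j).2 = true} with hB3
    set B4 : Set (Fin n → Bool × Bool) :=
      {ω | ∃ k, ‖v' k - v' jstar'‖ ≤ τ ∧ (ω k).2 = false} with hB4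
    have hB1null : Measure.pi γ B1 = 0 := by
      rw [hB1, Set.setOf_exists]
      refine measure_iUnion_null fun j => ?_
      by_cases hpj : p j = 0
      · have : {ω : Fin n → Bool × Bool | p j = 0 ∧ (ω j).1 = true}
            = {ω : Fin n → Bool × Bool | ω j ∈ {q : Bool × Bool | q.1 = true}} := by
          ext ω; simp [hpj]
        rw [this, hsingle, hγ]
        rw [coup_fst_true (hp0 j) (hp0' j) (hp1 j) (hp1' j), hpj]
        simp
      · have : {ω : Fin n → Bool × Bool | p j = 0 ∧ (ω j).1 = true} = ∅ := by
          ext ω; simp [hpj]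
        rw [this]; simp
    have hB2null : Measure.pi γ B2 = 0 := by
      rw [hB2, Set.setOf_exists]
      refine measure_iUnion_null fun k => ?_
      by_cases hk : ‖v k - v jstar‖ ≤ τ
      · have hpk : p k = 1 := selProb_eq_one hτ hstar hk hn0
        have : {ω : Fin n → Bool × Bool | ‖v k - v jstar‖ ≤ τ ∧ (ω k).1 = false}
            = {ω : Fin n → Bool × Bool | ω k ∈ {q : Bool × Bool | q.1 = false}} := by
          ext ω; simp [hk]
        rw [this, hsingle, hγ]
        rw [coup_fst_false (hp0 k) (hp0' k) (hp1 k) (hp1' k), hpk]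
        simp
      · have : {ω : Fin n → Bool × Bool | ‖v k - v jstar‖ ≤ τ ∧ (ω k).1 = false} = ∅ := by
          ext ω; simp [hk]
        rw [this]; simp
    have hB3null : Measure.pi γ B3 = 0 := by
      rw [hB3, Set.setOf_exists]
      refine measure_iUnion_null fun j => ?_
      by_cases hpj : p' j = 0
      · have : {ω : Fin n → Bool × Bool | p' j = 0 ∧ (ω j).2 = true}
            = {ω : Fin n → Bool × Bool | ω j ∈ {q : Bool × Bool | q.2 = true}} := by
          ext ω; simp [hpj]
        rw [this, hsingle, hγ]
        rw [coup_snd_true (hp0 j) (hp0' j) (hp1 j) (hp1' j), hpj]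
        simp
      · have : {ω : Fin n → Bool × Bool | p' j = 0 ∧ (ω j).2 = true} = ∅ := by
          ext ω; simp [hpj]
        rw [this]; simp
    have hB4null : Measure.pi γ B4 = 0 := by
      rw [hB4, Set.setOf_exists]
      refine measure_iUnion_null fun k => ?_
      by_cases hk : ‖v' k - v' jstar'‖ ≤ τ
      · have hpk : p' k = 1 := selProb_eq_one hτ hstar' hk hn0
        have : {ω : Fin n → Bool × Bool | ‖v' k - v' jstar'‖ ≤ τ ∧ (ω k).2 = false}
            = {ω : Fin n → Bool × Bool | ω k ∈ {q : Bool × Bool | q.2 = false}} := by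
          ext ω; simp [hk]
        rw [this, hsingle, hγ]
        rw [coup_snd_false (hp0 k) (hp0' k) (hp1 k) (hp1' k), hpk]
        simp
      · have : {ω : Fin n → Bool × Bool | ‖v' k - v' jstar'‖ ≤ τ ∧ (ω k).2 = false} = ∅ := by
          ext ω; simp [hk]
        rw [this]; simp
    -- the flip-count event
    set Ebad : Set (Fin n → Bool × Bool) :=
      {ω | t ≤ ((Finset.univ.erase j₀).filter (fun j => (ω j).1 ≠ (ω j).2)).card} with hEbad
    have hEbadle : Measure.pi γ Ebad ≤ ENNReal.ofReal ζ := by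
      set A : Set (Bool × Bool) := {q : Bool × Bool | q.1 ≠ q.2} with hA
      have hsub : Ebad ⊆ ⋃ U ∈ (Finset.univ.erase j₀).powersetCard t,
          {ω : Fin n → Bool × Bool | ∀ j ∈ U, ω j ∈ A} := by
        intro ω hω
        obtain ⟨U, hU, hUcard⟩ := Finset.exists_subset_card_eq hω
        refine Set.mem_iUnion₂.mpr ⟨U, ?_, ?_⟩
        · exact Finset.mem_powersetCard.mpr
            ⟨le_trans hU (Finset.filter_subset _ _), hUcard⟩
        · intro j hj
          exact (Finset.mem_filter.mp (hU hj)).2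
      refine le_trans (measure_mono hsub) ?_
      refine le_trans (measure_biUnion_finset_le _ _) ?_
      have hterm : ∀ U ∈ (Finset.univ.erase j₀).powersetCard t,
          Measure.pi γ {ω : Fin n → Bool × Bool | ∀ j ∈ U, ω j ∈ A}
            ≤ ENNReal.ofReal ((6:ℝ)/n) ^ t := by
        intro U hU
        obtain ⟨hUsub, hUcard⟩ := Finset.mem_powersetCard.mp hU
        rw [pi_cyl γ U A]
        calc ∏ j ∈ U, γ j A ≤ ∏ _j ∈ U, ENNReal.ofReal ((6:ℝ)/n) := by
              refine Finset.prod_le_prod' fun j hj => ?_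
              have hjne : j ≠ j₀ := (Finset.mem_erase.mp (hUsub hj)).1
              exact coup_ne_le (selProb_diff_le hn τ hjne hj₀eq)
          _ = ENNReal.ofReal ((6:ℝ)/n) ^ t := by
              rw [Finset.prod_const, hUcard]
      refine le_trans (Finset.sum_le_sum hterm) ?_
      rw [Finset.sum_const, Finset.card_powersetCard, Finset.card_erase_of_mem
        (Finset.mem_univ _), Finset.card_univ, Fintype.card_fin]
      rw [nsmul_eq_mul]
      calc ((n-1).choose t : ℝ≥0∞) * ENNReal.ofReal ((6:ℝ)/n) ^ t
          = ENNReal.ofReal (((n-1).choose t : ℝ) * ((6:ℝ)/n) ^ t) := by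
            rw [ENNReal.ofReal_mul (by positivity), ← ENNReal.ofReal_pow (by positivity)]
            congr 1
            rw [ENNReal.ofReal_natCast]
        _ ≤ ENNReal.ofReal ζ := by
            apply ENNReal.ofReal_le_ofReal
            exact tail_bound hn hζ0 hζ1
    -- the bad event inclusion
    have hmeasbad : MeasurableSet {xy : EuclideanSpace ℝ (Fin d) × EuclideanSpace ℝ (Fin d) |
        3000 * τ * Real.log (2 / ζ) / n < ‖xy.1 - xy.2‖} := by
      have hcont : Continuous fun xy : EuclideanSpace ℝ (Fin d) × EuclideanSpace ℝ (Fin d) =>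
          ‖xy.1 - xy.2‖ := by fun_prop
      exact measurableSet_lt measurable_const hcont.measurable
    rw [Measure.map_apply (Measurable.of_discrete (f := F)) hmeasbad]
    -- the center distance
    have hcc' : ‖v jstar - v' jstar'‖ ≤ 2 * τ := by
      set T : Set (Fin n) := {k | ‖v k - v jstar‖ ≤ τ} with hT
      set T' : Set (Fin n) := {k | ‖v' k - v' jstar'‖ ≤ τ} with hT'
      have hint : 2 ≤ (T ∩ T').ncard := by
        have hc := Set.ncard_inter_add_ncard_union T T' (Set.toFinite _) (Set.toFinite _)
        have hun : ((T ∪ T').ncard : ℝ) ≤ n := by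
          have := Set.ncard_le_ncard (Set.subset_univ (T ∪ T')) (Set.toFinite _)
          rw [Set.ncard_univ] at this
          exact_mod_cast by simpa using this
        have hcR : ((T ∩ T').ncard : ℝ) + ((T ∪ T').ncard : ℝ)
            = (T.ncard : ℝ) + (T'.ncard : ℝ) := by exact_mod_cast hc
        have hn6 : (6:ℝ) ≤ (n:ℝ) := by exact_mod_cast hn
        have : (2:ℝ) ≤ ((T ∩ T').ncard : ℝ) := by nlinarith
        exact_mod_cast this
      have hnsub : ¬ (T ∩ T' ⊆ {j₀}) := by
        intro hsub
        have := Set.ncard_le_ncard hsub (Set.finite_singleton _)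
        rw [Set.ncard_singleton] at this
        omega
      obtain ⟨k, hkmem, hkne⟩ := Set.not_subset.mp hnsub
      rw [Set.mem_singleton_iff] at hkne
      obtain ⟨hkT, hkT'⟩ := hkmem
      rw [hT, Set.mem_setOf_eq] at hkT
      rw [hT', Set.mem_setOf_eq] at hkT'
      calc ‖v jstar - v' jstar'‖ = ‖(v jstar - v k) + (v' k - v' jstar')‖ := by
            rw [← hj₀eq k hkne, sub_add_sub_cancel]
        _ ≤ ‖v jstar - v k‖ + ‖v' k - v' jstar'‖ := norm_add_le _ _
        _ ≤ 2 * τ := by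
            rw [norm_sub_rev]
            linarith
    -- inclusion of preimage in bad sets
    have hincl : F ⁻¹' {xy : EuclideanSpace ℝ (Fin d) × EuclideanSpace ℝ (Fin d) |
        3000 * τ * Real.log (2 / ζ) / n < ‖xy.1 - xy.2‖} ⊆ B1 ∪ B2 ∪ B3 ∪ B4 ∪ Ebad := by
      intro ω hω
      by_contra hnot
      simp only [Set.mem_union, not_or] at hnot
      obtain ⟨⟨⟨⟨hnB1, hnB2⟩, hnB3⟩, hnB4⟩, hnE⟩ := hnot
      rw [hB1, Set.mem_setOf_eq] at hnB1
      rw [hB2, Set.mem_setOf_eq] at hnB2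
      rw [hB3, Set.mem_setOf_eq] at hnB3
      rw [hB4, Set.mem_setOf_eq] at hnB4
      push_neg at hnB1 hnB2 hnB3 hnB4
      rw [hEbad, Set.mem_setOf_eq] at hnE
      push_neg at hnE
      set s : Fin n → Bool := fun j => (ω j).1 with hs
      set s' : Fin n → Bool := fun j => (ω j).2 with hs'
      set W : Finset (Fin n) :=
        (Finset.univ.erase j₀).filter (fun j => (ω j).1 ≠ (ω j).2) with hW
      have hWcard : (W.card : ℝ) + 1 ≤ (t : ℝ) := by
        have : W.card + 1 ≤ t := hnE
        exact_mod_cast this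
      have hbound := mean_diff_bound hn hτ v v' j₀ hj₀eq (v jstar) (v' jstar') hcc'
        s s'
        (fun j hj => dist_center_of_selProb_ne_zero hτ hstar
          (fun h0 => by exact absurd hj (by simp [hs, hnB1 j h0]) ) hn0)
        (fun j hj => dist_center_of_selProb_ne_zero hτ hstar'
          (fun h0 => by exact absurd hj (by simp [hs', hnB3 j h0]) ) hn0)
        (by
          -- card bound via T
          refine le_trans hstar ?_
          have hsubT : {k : Fin n | ‖v k - v jstar‖ ≤ τ}
              ⊆ ↑(Finset.univ.filter fun j => s j = true) := by
            intro k hk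
            rw [Set.mem_setOf_eq] at hk
            simp only [Finset.coe_filter, Set.mem_setOf_eq, Finset.mem_univ, true_and]
            exact Bool.ne_false_iff.mp (hnB2 k hk)
          have := Set.ncard_le_ncard hsubT (Set.toFinite _)
          rw [Set.ncard_coe_finset] at this
          exact_mod_cast this)
        (by
          refine le_trans hstar' ?_
          have hsubT : {k : Fin n | ‖v' k - v' jstar'‖ ≤ τ}
              ⊆ ↑(Finset.univ.filter fun j => s' j = true) := by
            intro k hk
            rw [Set.mem_setOf_eq] at hk
            simp only [Finset.coe_filter, Set.mem_setOf_eq, Finset.mem_univ, true_and]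
            exact Bool.ne_false_iff.mp (hnB4 k hk)
          have := Set.ncard_le_ncard hsubT (Set.toFinite _)
          rw [Set.ncard_coe_finset] at this
          exact_mod_cast this)
        W
        (fun j hjne hjflip => Finset.mem_filter.mpr
          ⟨Finset.mem_erase.mpr ⟨hjne, Finset.mem_univ _⟩, hjflip⟩)
      rw [Set.mem_preimage, Set.mem_setOf_eq] at hω
      have hle : ‖subsetMean v s - subsetMean v' s'‖ ≤ 3000 * τ * L / n := by
        refine le_trans hbound ?_
        have h102 : (W.card : ℝ) + 1 ≤ 102 * L := by
          calc (W.card : ℝ) + 1 ≤ (t:ℝ) := hWcard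
            _ ≤ 100 * L + 1 := htU
            _ ≤ 102 * L := by nlinarith
        calc 29 * τ * ((W.card:ℝ) + 1) / n ≤ 29 * τ * (102 * L) / n := by
              apply div_le_div_of_nonneg_right _ hn'.le
              nlinarith
          _ ≤ 3000 * τ * L / n := by
              apply div_le_div_of_nonneg_right _ hn'.le
              nlinarith
      exact absurd hω (not_lt.mpr hle)
    refine le_trans (measure_mono hincl) ?_
    calc Measure.pi γ (B1 ∪ B2 ∪ B3 ∪ B4 ∪ Ebad)
        ≤ Measure.pi γ (B1 ∪ B2 ∪ B3 ∪ B4) + Measure.pi γ Ebad := measure_union_le _ _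
      _ ≤ ENNReal.ofReal ζ := by
          have h4 : Measure.pi γ (B1 ∪ B2 ∪ B3 ∪ B4) = 0 := by
            refine measure_union_null (measure_union_null (measure_union_null ?_ ?_) ?_) ?_
              <;> assumption
          rw [h4, zero_add]
          exact hEbadle
end

section
/- Let (T, 𝒯) and (S, 𝒮) be measurable spaces, and let μ be a probability measure on T × S with first marginal μ_T and second marginal μ_S. Suppose μ disintegrates through a Markov kernel κ from T to S, i.e. μ(A × B) = ∫_A κ(t)(B) dμ_T(t) for all A ∈ 𝒯, B ∈ 𝒮, and suppose there is ε ≥ 0 such that for μ_T-almost every t and every B ∈ 𝒮, κ(t)(B) ≤ e^{2ε}·μ_S(B). Let W ⊆ T × S be a measurable set such that μ_S({z : (t,z) ∈ W}) ≤ γ for every t ∈ T. Then μ(W) ≤ e^{2ε}·γ. -/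
open MeasureTheory ProbabilityTheory
open scoped ENNReal

theorem stmt7 {T S : Type*} [MeasurableSpace T] [MeasurableSpace S]
    (μ : Measure (T × S)) [IsProbabilityMeasure μ]
    (κ : Kernel T S) [IsMarkovKernel κ]
    (hdis : ∀ A B, MeasurableSet A → MeasurableSet B →
      μ (A ×ˢ B) = ∫⁻ t in A, κ t B ∂(μ.map Prod.fst))
    (ε : ℝ) (hε : 0 ≤ ε)
    (hκ : ∀ᵐ t ∂(μ.map Prod.fst), ∀ B, MeasurableSet B →
      κ t B ≤ ENNReal.ofReal (Real.exp (2 * ε)) * (μ.map Prod.snd) B)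
    (γ : ℝ) (W : Set (T × S)) (hW : MeasurableSet W)
    (hWγ : ∀ t, (μ.map Prod.snd) {z | (t, z) ∈ W} ≤ ENNReal.ofReal γ) :
    μ W ≤ ENNReal.ofReal (Real.exp (2 * ε) * γ) := by
  set μT := μ.map Prod.fst with hμT
  have hPT : IsProbabilityMeasure μT := Measure.isProbabilityMeasure_map measurable_fst.aemeasurable
  -- μ = μT ⊗ₘ κ
  have hμ : μ = μT.compProd κ := by
    refine MeasureTheory.ext_of_generate_finite _
      generateFrom_prod.symm isPiSystem_prod ?_ ?_
    · rintro _ ⟨A, hA, B, hB, rfl⟩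
      rw [hdis A B hA hB, Measure.compProd_apply_prod hA hB]
    · simp [measure_univ]
  have hslice : ∀ t : T, MeasurableSet {z | (t, z) ∈ W} :=
    fun t => measurable_prodMk_left hW
  rw [hμ, Measure.compProd_apply hW]
  calc ∫⁻ t, κ t (Prod.mk t ⁻¹' W) ∂μT
      ≤ ∫⁻ _, ENNReal.ofReal (Real.exp (2 * ε)) * ENNReal.ofReal γ ∂μT := by
        refine lintegral_mono_ae ?_
        filter_upwards [hκ] with t ht
        exact le_trans (ht _ (hslice t))
          (mul_le_mul_right (hWγ t) _)
    _ = ENNReal.ofReal (Real.exp (2 * ε)) * ENNReal.ofReal γ := by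
        simp [measure_univ]
    _ = ENNReal.ofReal (Real.exp (2 * ε) * γ) := by
        rw [ENNReal.ofReal_mul (Real.exp_nonneg _)]
end
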